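/- arXiv:1101.1633 — 9 statements merged into one kernel-verified Lean document; each statement's English description precedes it below -/
import Mathlib

section
/- A player p_i will inoculate (i.e., inoculation strictly lowers its perceived cost) if and only if the size k_i of its attack component satisfies k_i > (Cn/L + F·Σ_{j∈Γ̄(p_i)} k_j)/(1 + F·|Γ̄(p_i)|), where Γ̄(p_i) is the set of insecure neighbors of p_i and k_j are the attack component sizes of the insecure neighbors when p_i is secure. -/
open Finset

/-- Lemma 1 (attack component threshold, absolute friendship model).
Player `p_i` (with `gsec` secure neighbors, insecure neighbors indexed by `s` whose attack
components, assuming `p_i` secure, have sizes `k j`) strictly prefers to inoculate, i.e. its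
perceived cost as an insecure player in an attack component of size `ki` exceeds its perceived
cost when inoculated, if and only if
`ki > (Cn/L + F·Σ_{j∈Γ̄} k j)/(1 + F·|Γ̄|)`. -/
theorem stmt0 {ι : Type*} (s : Finset ι) (k : ι → ℝ) (n C L F gsec ki : ℝ)
    (hn : 0 < n) (hL : 0 < L) (hF0 : 0 ≤ F) (hF1 : F ≤ 1)
    (hC : L / n < C) (hCL : C ≤ L) :
    (L * ki / n + F * (gsec * C + (s.card : ℝ) * (L * ki / n)) >
      C + F * (gsec * C + ∑ j ∈ s, L * k j / n)) ↔
    ki > (C * n / L + F * ∑ j ∈ s, k j) / (1 + F * (s.card : ℝ)) := by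
  have hs : ∑ j ∈ s, L * k j / n = (L / n) * ∑ j ∈ s, k j := by
    rw [Finset.mul_sum]; exact Finset.sum_congr rfl (fun j _ => by ring)
  have hcard : (0:ℝ) ≤ (s.card : ℝ) := Nat.cast_nonneg _
  have hd : (0:ℝ) < 1 + F * (s.card : ℝ) := by positivity
  have hLn : (0:ℝ) < L / n := by positivity
  rw [hs, gt_iff_lt, gt_iff_lt, div_lt_iff₀ hd]
  have hL' : L ≠ 0 := ne_of_gt hL
  have hn' : n ≠ 0 := ne_of_gt hn
  have e1 : L * ki / n + F * (gsec * C + (s.card : ℝ) * (L * ki / n))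
      = (L / n) * (ki * (1 + F * (s.card : ℝ))) + F * (gsec * C) := by ring
  have e2 : C + F * (gsec * C + L / n * ∑ j ∈ s, k j)
      = (L / n) * (C * n / L + F * ∑ j ∈ s, k j) + F * (gsec * C) := by
    field_simp; ring
  rw [e1, e2, add_lt_add_iff_right]
  exact mul_lt_mul_iff_right₀ hLn
end

section
/- For every n > 3, there exists an instance of the virus inoculation game on the star graph S_n and friendship factors F_s < F_l such that the worst friendship Nash equilibrium under F_l has strictly higher social cost than the worst friendship Nash equilibrium under F_s; hence the Windfall of Friendship is not monotone in F. Concretely, with C = 5L/(2n) + F_l·L/n, F_l = 3/4 and F_s = 1/8, under F_l there is an FNE where only the center and one leaf are insecure (cost (n−2)C + 4L/n) while under F_s the worst FNE has only the center secure (cost C + (n−1)L/n), and (n−2)C + 4L/n > C + (n−1)L/n. -/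
open Finset
open scoped Classical

noncomputable section

variable {V : Type*} [Fintype V] [DecidableEq V]

/-- Reachability through insecure players: a path along edges whose endpoints are all insecure. -/
def insecureReach (G : SimpleGraph V) (a : V → Bool) : V → V → Prop :=
  Relation.ReflTransGen (fun x y => G.Adj x y ∧ a x = false ∧ a y = false)

/-- Size of `i`'s attack component (if `i` is secure: the size of the component that would
result if `i` became insecure). -/
def compSize (G : SimpleGraph V) (a : V → Bool) (i : V) : ℕ :=
  {j | insecureReach G (Function.update a i false) i j}.ncard

/-- Actual individual cost: `C` if inoculated, else `L · k_i / n`. -/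
def actualCost (G : SimpleGraph V) (C L : ℝ) (a : V → Bool) (i : V) : ℝ :=
  if a i = true then C else L * (compSize G a i) / (Fintype.card V)

def socialCost (G : SimpleGraph V) (C L : ℝ) (a : V → Bool) : ℝ :=
  ∑ i, actualCost G C L a i

/-- Perceived cost: actual cost plus `F` times the sum of the neighbors' actual costs. -/
def perceivedCost (G : SimpleGraph V) (C L F : ℝ) (a : V → Bool) (i : V) : ℝ :=
  actualCost G C L a i +
    F * ∑ j ∈ Finset.univ.filter (fun j => G.Adj i j), actualCost G C L a j

/-- Pure Nash equilibrium: no unilateral deviation lowers the actual cost. -/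
def isNE (G : SimpleGraph V) (C L : ℝ) (a : V → Bool) : Prop :=
  ∀ (i : V) (b : Bool),
    actualCost G C L a i ≤ actualCost G C L (Function.update a i b) i

/-- Friendship Nash equilibrium: no unilateral deviation lowers the perceived cost. -/
def isFNE (G : SimpleGraph V) (C L F : ℝ) (a : V → Bool) : Prop :=
  ∀ (i : V) (b : Bool),
    perceivedCost G C L F a i ≤ perceivedCost G C L F (Function.update a i b) i

/-- Star graph on `Fin n` with center `0`. -/
def starG (n : ℕ) : SimpleGraph (Fin n) :=
  SimpleGraph.fromRel (fun i _ => i.val = 0)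

/-! On the star the actual cost of an insecure player depends only on whether the center is
secure and on the number `k` of insecure players: it is `L/n` if the center is secure and
`k L/n` otherwise. Each unilateral deviation therefore changes a perceived cost by an explicit
expression in `k`, `F`, `C` and `L/n`, and being an FNE amounts to three inequalities, one for
the center and one for each kind of leaf. Take `C = 13L/(4n)`. For `F = 3/4` the profile in
which the center and one leaf are insecure satisfies them. For `F = 1/8` an insecure center
forces `k ≤ 2`, whereas a secure leaf forces `k ≥ 3`; so the center is secure in every FNE,
and then every leaf is insecure because `C > L/n`: the FNE with only the center secure is
the unique one. -/

open Function

def numInsecure (a : V → Bool) : ℕ := (Finset.univ.filter (fun i => a i = false)).card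

lemma numInsecure_update_true_add_one {a : V → Bool} {i : V} (hi : a i = false) :
    numInsecure (update a i true) + 1 = numInsecure a := by
  have : Finset.univ.filter (fun j => update a i true j = false) =
      (Finset.univ.filter (fun j => a j = false)).erase i := by
    ext j
    by_cases hj : j = i <;> simp [update_apply, hj]
  rw [numInsecure, this, Finset.card_erase_add_one (by simpa using hi)]
  rfl

lemma numInsecure_update_false {a : V → Bool} {i : V} (hi : a i = true) :
    numInsecure (update a i false) = numInsecure a + 1 := by
  have : Finset.univ.filter (fun j => update a i false j = false) =
      insert i (Finset.univ.filter (fun j => a j = false)) := by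
    ext j
    by_cases hj : j = i <;> simp [update_apply, hj]
  rw [numInsecure, this, Finset.card_insert_of_notMem (by simp [hi])]
  rfl

lemma exists_secure_of_numInsecure_lt {W : Type*} [Fintype W] {a : W → Bool}
    (h : numInsecure a < Fintype.card W) :
    ∃ i, a i = true := by
  by_contra! hall
  refine h.ne ?_
  rw [numInsecure, Finset.filter_true_of_mem (fun i _ => by simpa using hall i),
    Finset.card_univ]

lemma isFNE_iff_forall_flip {G : SimpleGraph V} {C L F : ℝ} {a : V → Bool} :
    isFNE G C L F a ↔
      ∀ i, perceivedCost G C L F a i ≤ perceivedCost G C L F (update a i (!a i)) i := by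
  refine ⟨fun h i => h i _, fun h i b => ?_⟩
  rcases Bool.eq_or_eq_not b (a i) with rfl | rfl
  · rw [update_eq_self]
  · exact h i

lemma insecureReach.eq_or_insecure {W : Type*} {G : SimpleGraph W} {a : W → Bool} {i j : W}
    (h : insecureReach G a i j) : j = i ∨ a j = false := by
  rcases h.cases_tail with rfl | ⟨_, _, _, _, hj⟩
  exacts [Or.inl rfl, Or.inr hj]

lemma le_iff_le_of_sub_eq_sub {α : Type*} [AddCommGroup α] [LinearOrder α] [IsOrderedAddMonoid α]
    {a b c d : α} (h : b - a = d - c) : a ≤ b ↔ c ≤ d := by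
  rw [← sub_nonneg, h, sub_nonneg]

section Star

variable {n : ℕ} [NeZero n] {C L F : ℝ} {a : Fin n → Bool} {i j : Fin n}

lemma starG_adj : (starG n).Adj i j ↔ i ≠ j ∧ (i = 0 ∨ j = 0) := by
  simp only [starG, SimpleGraph.fromRel_adj, Fin.ext_iff, Fin.val_zero]

lemma insecureReach_starG_iff_of_center_insecure (h0 : a 0 = false) (hi : a i = false) :
    insecureReach (starG n) a i j ↔ a j = false := by
  refine ⟨fun h => h.eq_or_insecure.elim (· ▸ hi) id, fun hj => ?_⟩
  have toCenter : insecureReach (starG n) a i 0 := by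
    by_cases hi0 : i = 0
    · exact hi0 ▸ Relation.ReflTransGen.refl
    · exact .single ⟨starG_adj.2 ⟨hi0, .inr rfl⟩, hi, h0⟩
  by_cases hj0 : j = 0
  · exact hj0 ▸ toCenter
  · exact toCenter.tail ⟨starG_adj.2 ⟨Ne.symm hj0, .inl rfl⟩, h0, hj⟩

lemma insecureReach_starG_iff_of_center_secure (h0 : a 0 = true) :
    insecureReach (starG n) a i j ↔ j = i := by
  refine ⟨fun h => ?_, fun h => h ▸ Relation.ReflTransGen.refl⟩
  rcases h.cases_tail with rfl | ⟨c, _, hcj, hc, hj⟩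
  · rfl
  · rcases (starG_adj.1 hcj).2 with rfl | rfl <;> simp_all

lemma compSize_starG (hi : a i = false) :
    compSize (starG n) a i = if a 0 = true then 1 else numInsecure a := by
  rw [compSize, update_eq_self_iff.2 hi.symm]
  split_ifs with h0
  · simp_rw [insecureReach_starG_iff_of_center_secure h0, Set.ofPred_eq_eq_singleton,
      Set.ncard_singleton]
  · simp_rw [insecureReach_starG_iff_of_center_insecure (Bool.eq_false_iff.2 h0) hi]
    rw [numInsecure, ← Set.ncard_coe_finset]
    simp

lemma actualCost_starG :
    actualCost (starG n) C L a i =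
      if a i = true then C else if a 0 = true then L / n else numInsecure a * (L / n) := by
  rw [actualCost]
  split_ifs with hi h0
  · rfl
  · rw [compSize_starG (by simpa using hi), if_pos h0, Fintype.card_fin, Nat.cast_one, mul_one]
  · rw [compSize_starG (by simpa using hi), if_neg h0, Fintype.card_fin]
    ring

lemma socialCost_starG :
    socialCost (starG n) C L a =
      (n - numInsecure a) * C +
        numInsecure a * (if a 0 = true then L / n else numInsecure a * (L / n)) := by
  have hcard := Finset.card_filter_add_card_filter_not (s := Finset.univ) (fun j => a j = true)
  simp only [Bool.not_eq_true, Finset.card_univ, Fintype.card_fin] at hcard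
  have hsecure : ((Finset.univ.filter (fun j => a j = true)).card : ℝ) = n - numInsecure a := by
    rw [eq_sub_iff_add_eq]
    exact_mod_cast hcard
  simp_rw [socialCost, actualCost_starG]
  rw [Finset.sum_ite, Finset.sum_const, Finset.sum_const, nsmul_eq_mul, nsmul_eq_mul, hsecure]
  simp only [Bool.not_eq_true]
  rfl

lemma perceivedCost_starG_center :
    perceivedCost (starG n) C L F a 0 =
      actualCost (starG n) C L a 0 +
        F * (socialCost (starG n) C L a - actualCost (starG n) C L a 0) := by
  have : Finset.univ.filter (fun j => (starG n).Adj 0 j) = Finset.univ.erase 0 := by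
    ext j
    simp [starG_adj, eq_comm]
  rw [perceivedCost, this, Finset.sum_erase_eq_sub (Finset.mem_univ _), socialCost]

lemma perceivedCost_starG_leaf (hi : i ≠ 0) :
    perceivedCost (starG n) C L F a i =
      actualCost (starG n) C L a i + F * actualCost (starG n) C L a 0 := by
  have : Finset.univ.filter (fun j => (starG n).Adj i j) = {0} := by
    ext j
    simp only [Finset.mem_filter, Finset.mem_univ, true_and, Finset.mem_singleton, starG_adj]
    exact ⟨fun h => h.2.resolve_left hi, fun h => ⟨h ▸ hi, .inr h⟩⟩
  rw [perceivedCost, this, Finset.sum_singleton]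

lemma center_stays_insecure_iff (h0 : a 0 = false) :
    perceivedCost (starG n) C L F a 0 ≤ perceivedCost (starG n) C L F (update a 0 true) 0 ↔
      (numInsecure a + F * (numInsecure a - 1) ^ 2) * (L / n) ≤ C := by
  have hk : (numInsecure (update a 0 true) : ℝ) = numInsecure a - 1 := by
    rw [eq_sub_iff_add_eq]
    exact_mod_cast numInsecure_update_true_add_one h0
  refine le_iff_le_of_sub_eq_sub ?_
  simp only [perceivedCost_starG_center, socialCost_starG, actualCost_starG, update_self, h0, hk,
    Bool.false_eq_true, ↓reduceIte]
  ring

lemma center_stays_secure_iff (h0 : a 0 = true) :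
    perceivedCost (starG n) C L F a 0 ≤ perceivedCost (starG n) C L F (update a 0 false) 0 ↔
      C ≤ (numInsecure a + 1 + F * numInsecure a ^ 2) * (L / n) := by
  have hk : (numInsecure (update a 0 false) : ℝ) = numInsecure a + 1 := by
    exact_mod_cast numInsecure_update_false h0
  refine le_iff_le_of_sub_eq_sub ?_
  simp only [perceivedCost_starG_center, socialCost_starG, actualCost_starG, update_self, h0, hk,
    Bool.false_eq_true, ↓reduceIte]
  ring

lemma leaf_stays_secure_iff_of_center_insecure (h0 : a 0 = false) (hi : a i = true) :
    perceivedCost (starG n) C L F a i ≤ perceivedCost (starG n) C L F (update a i false) i ↔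
      C ≤ (numInsecure a + 1 + F) * (L / n) := by
  have hi0 : i ≠ 0 := by rintro rfl; simp_all
  have hk : (numInsecure (update a i false) : ℝ) = numInsecure a + 1 := by
    exact_mod_cast numInsecure_update_false hi
  refine le_iff_le_of_sub_eq_sub ?_
  simp only [perceivedCost_starG_leaf hi0, actualCost_starG, update_self, ne_eq, hi0.symm,
    not_false_eq_true, update_of_ne, h0, hi, hk, Bool.false_eq_true, ↓reduceIte]
  ring

lemma leaf_stays_insecure_iff_of_center_insecure (h0 : a 0 = false) (hi0 : i ≠ 0)
    (hi : a i = false) :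
    perceivedCost (starG n) C L F a i ≤ perceivedCost (starG n) C L F (update a i true) i ↔
      (numInsecure a + F) * (L / n) ≤ C := by
  have hk : (numInsecure (update a i true) : ℝ) = numInsecure a - 1 := by
    rw [eq_sub_iff_add_eq]
    exact_mod_cast numInsecure_update_true_add_one hi
  refine le_iff_le_of_sub_eq_sub ?_
  simp only [perceivedCost_starG_leaf hi0, actualCost_starG, update_self, ne_eq, hi0.symm,
    not_false_eq_true, update_of_ne, h0, hi, hk, Bool.false_eq_true, ↓reduceIte]
  ring

lemma leaf_stays_secure_iff_of_center_secure (h0 : a 0 = true) (hi0 : i ≠ 0) (hi : a i = true) :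
    perceivedCost (starG n) C L F a i ≤ perceivedCost (starG n) C L F (update a i false) i ↔
      C ≤ L / n := by
  refine le_iff_le_of_sub_eq_sub ?_
  simp [perceivedCost_starG_leaf hi0, actualCost_starG, hi0.symm, h0, hi]

lemma leaf_stays_insecure_iff_of_center_secure (h0 : a 0 = true) (hi : a i = false) :
    perceivedCost (starG n) C L F a i ≤ perceivedCost (starG n) C L F (update a i true) i ↔
      L / n ≤ C := by
  have hi0 : i ≠ 0 := by rintro rfl; simp_all
  refine le_iff_le_of_sub_eq_sub ?_
  simp [perceivedCost_starG_leaf hi0, actualCost_starG, hi0.symm, h0, hi]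

theorem isFNE_starG_iff_of_center_insecure (h0 : a 0 = false) :
    isFNE (starG n) C L F a ↔
      (numInsecure a + F * (numInsecure a - 1) ^ 2) * (L / n) ≤ C ∧
      (∀ i, a i = true → C ≤ (numInsecure a + 1 + F) * (L / n)) ∧
      (∀ i ≠ 0, a i = false → (numInsecure a + F) * (L / n) ≤ C) := by
  rw [isFNE_iff_forall_flip]
  constructor
  · intro h
    refine ⟨(center_stays_insecure_iff h0).1 (by simpa [h0] using h 0), fun i hi => ?_,
      fun i hi0 hi => ?_⟩
    · exact (leaf_stays_secure_iff_of_center_insecure h0 hi).1 (by simpa [hi] using h i)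
    · exact (leaf_stays_insecure_iff_of_center_insecure h0 hi0 hi).1 (by simpa [hi] using h i)
  · rintro ⟨hcenter, hsecure, hinsecure⟩ i
    by_cases hi0 : i = 0
    · subst hi0
      simpa [h0] using (center_stays_insecure_iff h0).2 hcenter
    cases hi : a i
    · simpa [hi] using (leaf_stays_insecure_iff_of_center_insecure h0 hi0 hi).2
        (hinsecure i hi0 hi)
    · simpa [hi] using (leaf_stays_secure_iff_of_center_insecure h0 hi).2 (hsecure i hi)

theorem isFNE_starG_iff_of_center_secure (h0 : a 0 = true) :
    isFNE (starG n) C L F a ↔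
      C ≤ (numInsecure a + 1 + F * numInsecure a ^ 2) * (L / n) ∧
      (∀ i ≠ 0, a i = true → C ≤ L / n) ∧
      (∀ i, a i = false → L / n ≤ C) := by
  rw [isFNE_iff_forall_flip]
  constructor
  · intro h
    refine ⟨(center_stays_secure_iff h0).1 (by simpa [h0] using h 0), fun i hi0 hi => ?_,
      fun i hi => ?_⟩
    · exact (leaf_stays_secure_iff_of_center_secure h0 hi0 hi).1 (by simpa [hi] using h i)
    · exact (leaf_stays_insecure_iff_of_center_secure h0 hi).1 (by simpa [hi] using h i)
  · rintro ⟨hcenter, hsecure, hinsecure⟩ i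
    by_cases hi0 : i = 0
    · subst hi0
      simpa [h0] using (center_stays_secure_iff h0).2 hcenter
    cases hi : a i
    · simpa [hi] using (leaf_stays_insecure_iff_of_center_secure h0 hi).2 (hinsecure i hi)
    · simpa [hi] using (leaf_stays_secure_iff_of_center_secure h0 hi0 hi).2
        (hsecure i hi0 hi)

end Star

def centerAndLeafInsecure (n : ℕ) : Fin n → Bool := fun i => decide (2 ≤ i.val)

def onlyCenterSecure (n : ℕ) : Fin n → Bool := fun i => i.val == 0

lemma centerAndLeafInsecure_zero {n : ℕ} [NeZero n] : centerAndLeafInsecure n 0 = false := by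
  simp [centerAndLeafInsecure]

lemma numInsecure_centerAndLeafInsecure {n : ℕ} (hn : 2 ≤ n) :
    numInsecure (centerAndLeafInsecure n) = 2 := by
  simp only [numInsecure, centerAndLeafInsecure, decide_eq_false_iff_not, not_le,
    Fin.card_filter_val_lt]
  omega

section StarProfiles

variable {n : ℕ} [NeZero n] {C L F : ℝ} {a : Fin n → Bool}

lemma onlyCenterSecure_zero : onlyCenterSecure n 0 = true := by
  simp only [onlyCenterSecure, Fin.val_zero, beq_self_eq_true]

lemma onlyCenterSecure_eq_false_iff {i : Fin n} : onlyCenterSecure n i = false ↔ i ≠ 0 := by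
  simp only [onlyCenterSecure, beq_eq_false_iff_ne, ne_eq, Fin.ext_iff, Fin.val_zero]

lemma numInsecure_onlyCenterSecure_add_one : numInsecure (onlyCenterSecure n) + 1 = n := by
  have : Finset.univ.filter (fun i => onlyCenterSecure n i = false) = Finset.univ.erase 0 := by
    ext i
    simp [onlyCenterSecure_eq_false_iff]
  rw [numInsecure, this, Finset.card_erase_add_one (Finset.mem_univ _), Finset.card_univ,
    Fintype.card_fin]

lemma socialCost_centerAndLeafInsecure (hn : 2 ≤ n) :
    socialCost (starG n) C L (centerAndLeafInsecure n) = (n - 2) * C + 4 * L / n := by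
  rw [socialCost_starG, numInsecure_centerAndLeafInsecure hn, centerAndLeafInsecure_zero,
    if_neg Bool.false_ne_true]
  push_cast
  ring

lemma socialCost_onlyCenterSecure :
    socialCost (starG n) C L (onlyCenterSecure n) = C + (n - 1) * L / n := by
  have hk : (numInsecure (onlyCenterSecure n) : ℝ) = n - 1 := by
    rw [eq_sub_iff_add_eq]
    exact_mod_cast numInsecure_onlyCenterSecure_add_one
  rw [socialCost_starG, hk, onlyCenterSecure_zero, if_pos rfl]
  ring

lemma isFNE_centerAndLeafInsecure (hn : 2 ≤ n) (hlow : (2 + F) * (L / n) ≤ C)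
    (hhigh : C ≤ (3 + F) * (L / n)) :
    isFNE (starG n) C L F (centerAndLeafInsecure n) := by
  rw [isFNE_starG_iff_of_center_insecure centerAndLeafInsecure_zero,
    numInsecure_centerAndLeafInsecure hn]
  refine ⟨by norm_num [hlow], fun _ _ => by norm_num; linarith, fun _ _ _ => by norm_num [hlow]⟩

lemma isFNE_onlyCenterSecure (hlow : L / n ≤ C) (hhigh : C ≤ (n + F * (n - 1) ^ 2) * (L / n)) :
    isFNE (starG n) C L F (onlyCenterSecure n) := by
  have hk : (numInsecure (onlyCenterSecure n) : ℝ) = n - 1 := by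
    rw [eq_sub_iff_add_eq]
    exact_mod_cast numInsecure_onlyCenterSecure_add_one
  rw [isFNE_starG_iff_of_center_secure onlyCenterSecure_zero, hk]
  refine ⟨by simpa using hhigh, fun i hi0 hi => ?_, fun _ _ => hlow⟩
  simp [onlyCenterSecure_eq_false_iff.2 hi0] at hi

lemma eq_onlyCenterSecure_of_isFNE (ha : isFNE (starG n) C L F a) (h0 : a 0 = true)
    (hC : L / n < C) : a = onlyCenterSecure n := by
  obtain ⟨-, hsecure, -⟩ := (isFNE_starG_iff_of_center_secure h0).1 ha
  funext i
  by_cases hi0 : i = 0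
  · rw [hi0, h0, onlyCenterSecure_zero]
  · have : a i = false := by
      by_contra hi
      exact (hsecure i hi0 (by simpa using hi)).not_gt hC
    rw [this, onlyCenterSecure_eq_false_iff.2 hi0]

lemma center_secure_of_isFNE (hn : 2 < n) (hL : 0 < L)
    (ha : isFNE (starG n) (13 / 4 * (L / n)) L (1 / 8) a) : a 0 = true := by
  have hℓ : 0 < L / n := div_pos hL (by exact_mod_cast NeZero.pos n)
  by_contra h0
  obtain ⟨hcenter, hsecure, -⟩ :=
    (isFNE_starG_iff_of_center_insecure (Bool.eq_false_iff.2 h0)).1 ha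
  have hk : numInsecure a ≤ 2 := by
    by_contra! hk
    have : (3 : ℝ) ≤ numInsecure a := by exact_mod_cast hk
    nlinarith [le_of_mul_le_mul_right hcenter hℓ]
  obtain ⟨i, hi⟩ := exists_secure_of_numInsecure_lt (a := a) (by rw [Fintype.card_fin]; omega)
  have : (numInsecure a : ℝ) ≤ 2 := by exact_mod_cast hk
  linarith [le_of_mul_le_mul_right (hsecure i hi) hℓ]

end StarProfiles

/-- Theorem (non-monotonicity of the Windfall of Friendship): for every `n > 3` there is an
instance on the star `S_n` and friendship factors `F_s = 1/8 < F_l = 3/4` with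
`C = 5L/(2n) + F_l·L/n` such that under `F_l` there is an FNE in which the center and exactly
one leaf are insecure, of cost `(n−2)C + 4L/n`, while under `F_s` every FNE costs at most
`C + (n−1)L/n` (the cost of the FNE in which only the center is secure, which exists); and
`(n−2)C + 4L/n > C + (n−1)L/n`. Hence the worst-FNE cost is strictly larger for the larger
friendship factor. -/
theorem stmt2 (n : ℕ) (hn : 3 < n) :
    ∃ C L Fs Fl : ℝ, 0 < L ∧ L / n < C ∧ C ≤ L ∧
      Fs = 1 / 8 ∧ Fl = 3 / 4 ∧ Fs < Fl ∧
      C = 5 * L / (2 * n) + Fl * L / n ∧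
      (∃ a : Fin n → Bool, isFNE (starG n) C L Fl a ∧
        a ⟨0, by omega⟩ = false ∧
        (Finset.univ.filter (fun i => a i = false)).card = 2 ∧
        socialCost (starG n) C L a = ((n : ℝ) - 2) * C + 4 * L / n) ∧
      isFNE (starG n) C L Fs (fun i => i.val == 0) ∧
      socialCost (starG n) C L (fun i => i.val == 0) = C + ((n : ℝ) - 1) * L / n ∧
      (∀ a : Fin n → Bool, isFNE (starG n) C L Fs a →
        socialCost (starG n) C L a ≤ C + ((n : ℝ) - 1) * L / n) ∧
      ((n : ℝ) - 2) * C + 4 * L / n > C + ((n : ℝ) - 1) * L / n := by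
  have : NeZero n := ⟨by omega⟩
  have hn4 : (4 : ℝ) ≤ n := by exact_mod_cast hn
  have hℓ : (0 : ℝ) < 1 / n := by positivity
  have hℓ4 : (1 : ℝ) / n ≤ 1 / 4 := one_div_le_one_div_of_le (by norm_num) hn4
  refine ⟨13 / 4 * (1 / n), 1, 1 / 8, 3 / 4, one_pos, by linarith, by linarith, rfl, rfl,
    by norm_num, by ring, ⟨centerAndLeafInsecure n, ?_, ?_, ?_, ?_⟩, ?_,
    socialCost_onlyCenterSecure, fun a ha => ?_, ?_⟩
  · exact isFNE_centerAndLeafInsecure (by omega) (by linarith) (by linarith)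
  · exact centerAndLeafInsecure_zero
  · exact numInsecure_centerAndLeafInsecure (by omega)
  · exact socialCost_centerAndLeafInsecure (by omega)
  · exact isFNE_onlyCenterSecure (by linarith)
      (mul_le_mul_of_nonneg_right (by nlinarith) hℓ.le)
  · rw [eq_onlyCenterSecure_of_isFNE ha (center_secure_of_isFNE (by omega) one_pos ha)
      (by linarith), socialCost_onlyCenterSecure]
  · have : ((n : ℝ) - 2) * (13 / 4 * (1 / n)) + 4 * 1 / n - (13 / 4 * (1 / n) + (n - 1) * 1 / n)
        = (9 / 4 * n - 19 / 4) * (1 / n) := by ring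
    linarith [mul_pos (by linarith : (0 : ℝ) < 9 / 4 * n - 19 / 4) hℓ]
end
end

section
/- In the complete graph K_n, a pure Nash equilibrium with k insecure players exists if and only if ⌈Cn/L⌉ − 1 ≤ k ≤ ⌊Cn/L⌋. Consequently there are at most two Nash equilibria, with social costs C(n − ⌈Cn/L⌉ + 1) + (L/n)(⌈Cn/L⌉ − 1)² and C(n − ⌊Cn/L⌋) + (L/n)⌊Cn/L⌋², and exactly one if ⌈Cn/L⌉ − 1 = ⌊Cn/L⌋. -/
open Finset
open scoped Classical

noncomputable section

variable {V : Type*} [Fintype V] [DecidableEq V]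

lemma reach_top_aux {n : ℕ} (a : Fin n → Bool) (i : Fin n) (hi : a i = false) :
    {j | insecureReach (⊤ : SimpleGraph (Fin n)) a i j} = {j | a j = false} := by
  ext j
  simp only [Set.mem_setOf_eq]
  constructor
  · intro h
    induction h with
    | refl => exact hi
    | tail _ h ih => exact h.2.2
  · intro hj
    by_cases hij : j = i
    · subst hij; exact Relation.ReflTransGen.refl
    · exact Relation.ReflTransGen.single ⟨by simp [Ne.symm hij], hi, hj⟩

lemma compSize_top_aux {n : ℕ} (a : Fin n → Bool) (i : Fin n) (hi : a i = false) :
    compSize (⊤ : SimpleGraph (Fin n)) a i =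
      (Finset.univ.filter (fun j => a j = false)).card := by
  have hupd : Function.update a i false = a := by rw [← hi]; exact Function.update_eq_self i a
  rw [compSize, hupd, reach_top_aux a i hi]
  have : {j | a j = false} = ↑(Finset.univ.filter (fun j => a j = false)) := by
    ext j; simp
  rw [this, Set.ncard_coe_finset]

lemma filter_update_aux {n : ℕ} (a : Fin n → Bool) (i : Fin n) (hi : a i = true) :
    (Finset.univ.filter (fun j => Function.update a i false j = false)) =
      insert i (Finset.univ.filter (fun j => a j = false)) := by
  ext j
  simp only [mem_filter, mem_univ, true_and, mem_insert, Function.update_apply]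
  by_cases h : j = i <;> simp [h, hi]

lemma cost_top_false {n : ℕ} (C L : ℝ) (a : Fin n → Bool) (i : Fin n) (hi : a i = false) :
    actualCost (⊤ : SimpleGraph (Fin n)) C L a i =
      L * ((Finset.univ.filter (fun j => a j = false)).card : ℝ) / n := by
  rw [actualCost, if_neg (by simp [hi]), compSize_top_aux a i hi, Fintype.card_fin]

lemma cost_top_true {n : ℕ} (C L : ℝ) (a : Fin n → Bool) (i : Fin n) (hi : a i = true) :
    actualCost (⊤ : SimpleGraph (Fin n)) C L a i = C := by
  rw [actualCost, if_pos hi]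

lemma cost_update_true {n : ℕ} (C L : ℝ) (a : Fin n → Bool) (i : Fin n) :
    actualCost (⊤ : SimpleGraph (Fin n)) C L (Function.update a i true) i = C := by
  rw [actualCost, if_pos (Function.update_self i true a)]

lemma cost_update_false {n : ℕ} (C L : ℝ) (a : Fin n → Bool) (i : Fin n) (hi : a i = true) :
    actualCost (⊤ : SimpleGraph (Fin n)) C L (Function.update a i false) i =
      L * (((Finset.univ.filter (fun j => a j = false)).card : ℝ) + 1) / n := by
  rw [cost_top_false C L _ i (Function.update_self i false a), filter_update_aux a i hi]
  rw [Finset.card_insert_of_notMem (by simp [hi])]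
  push_cast; ring_nf

/-- Lemma (Nash equilibria of the complete graph `K_n`): a profile with `k` insecure players is
a pure NE iff `⌈Cn/L⌉ − 1 ≤ k ≤ ⌊Cn/L⌋`; every NE with `k` insecure players has social cost
`(n−k)C + k²L/n` (hence there are at most the two stated equilibrium costs); and if
`⌈Cn/L⌉ − 1 = ⌊Cn/L⌋` then all NE have the same number of insecure players. -/
theorem stmt3 (n : ℕ) (C L : ℝ) (hn : 0 < n) (hL : 0 < L)
    (hC : L / n < C) (hCL : C ≤ L) :
    (∀ a : Fin n → Bool,
      isNE (⊤ : SimpleGraph (Fin n)) C L a ↔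
        (⌈C * n / L⌉ - 1 ≤ ((Finset.univ.filter (fun i => a i = false)).card : ℤ) ∧
         ((Finset.univ.filter (fun i => a i = false)).card : ℤ) ≤ ⌊C * n / L⌋)) ∧
    (∀ a : Fin n → Bool, isNE (⊤ : SimpleGraph (Fin n)) C L a →
      socialCost (⊤ : SimpleGraph (Fin n)) C L a =
        ((n : ℝ) - (Finset.univ.filter (fun i => a i = false)).card) * C +
          ((Finset.univ.filter (fun i => a i = false)).card : ℝ) ^ 2 * L / n) ∧
    (⌈C * n / L⌉ - 1 = ⌊C * n / L⌋ →
      ∀ a b : Fin n → Bool, isNE (⊤ : SimpleGraph (Fin n)) C L a →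
        isNE (⊤ : SimpleGraph (Fin n)) C L b →
        (Finset.univ.filter (fun i => a i = false)).card =
          (Finset.univ.filter (fun i => b i = false)).card) := by
  have hn' : (0:ℝ) < (n:ℝ) := by exact_mod_cast hn
  have hC0 : 0 < C := lt_trans (by positivity) hC
  -- abbreviation
  have hNE : ∀ a : Fin n → Bool,
      isNE (⊤ : SimpleGraph (Fin n)) C L a ↔
      ((∀ i, a i = false →
          L * ((Finset.univ.filter (fun j => a j = false)).card : ℝ) / n ≤ C) ∧
       (∀ i, a i = true →
          C ≤ L * (((Finset.univ.filter (fun j => a j = false)).card : ℝ) + 1) / n)) := by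
    intro a
    constructor
    · intro h
      refine ⟨fun i hi => ?_, fun i hi => ?_⟩
      · have := h i true
        rwa [cost_top_false C L a i hi, cost_update_true] at this
      · have := h i false
        rwa [cost_top_true C L a i hi, cost_update_false C L a i hi] at this
    · rintro ⟨h1, h2⟩ i b
      cases hb : a i with
      | false =>
        cases b with
        | false =>
          have : Function.update a i false = a := by rw [← hb]; exact Function.update_eq_self i a
          rw [this]
        | true =>
          rw [cost_top_false C L a i hb, cost_update_true]
          exact h1 i hb
      | true =>
        cases b with
        | false =>
          rw [cost_top_true C L a i hb, cost_update_false C L a i hb]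
          exact h2 i hb
        | true =>
          have : Function.update a i true = a := by rw [← hb]; exact Function.update_eq_self i a
          rw [this]
  have hchar : ∀ a : Fin n → Bool,
      isNE (⊤ : SimpleGraph (Fin n)) C L a ↔
        (⌈C * n / L⌉ - 1 ≤ ((Finset.univ.filter (fun i => a i = false)).card : ℤ) ∧
         ((Finset.univ.filter (fun i => a i = false)).card : ℤ) ≤ ⌊C * n / L⌋) := by
    intro a
    rw [hNE a]
    set k : ℕ := (Finset.univ.filter (fun i => a i = false)).card with hk
    have hkn : k ≤ n := by
      rw [hk]; simpa using Finset.card_filter_le Finset.univ (fun i => a i = false)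
    constructor
    · rintro ⟨h1, h2⟩
      constructor
      · -- ceiling bound
        have hceil : C * n / L ≤ (k : ℝ) + 1 := by
          rcases lt_or_eq_of_le hkn with hlt | heq
          · -- there is a secure player
            have hex : ∃ i, a i = true := by
              by_contra hcon
              push_neg at hcon
              have : ∀ i, a i = false := fun i => by
                cases h : a i with
                | false => rfl
                | true => exact absurd h (hcon i)
              have : k = n := by
                rw [hk]
                simp [Finset.filter_true_of_mem (fun i _ => this i)]
              omega
            obtain ⟨i, hi⟩ := hex
            have := h2 i hi
            rw [div_le_iff₀ hL]
            rw [le_div_iff₀ hn'] at this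
            nlinarith
          · -- k = n, use C ≤ L
            rw [div_le_iff₀ hL]
            have hkn' : (k:ℝ) = n := by exact_mod_cast heq
            nlinarith
        have : ⌈C * n / L⌉ ≤ (k : ℤ) + 1 := by
          rw [Int.ceil_le]; push_cast; exact hceil
        omega
      · -- floor bound
        rw [Int.le_floor]
        push_cast
        rcases Nat.eq_zero_or_pos k with h0 | hpos
        · rw [h0]; push_cast; positivity
        · have hex : ∃ i, a i = false := by
            have hpos' : 0 < (Finset.univ.filter (fun i => a i = false)).card := hpos
            obtain ⟨i, hi⟩ := Finset.card_pos.mp hpos'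
            exact ⟨i, (Finset.mem_filter.mp hi).2⟩
          obtain ⟨i, hi⟩ := hex
          have := h1 i hi
          rw [le_div_iff₀ hL]
          rw [div_le_iff₀ hn'] at this
          nlinarith
    · rintro ⟨hc, hf⟩
      constructor
      · intro i _
        rw [Int.le_floor] at hf
        push_cast at hf
        rw [div_le_iff₀ hn']
        rw [le_div_iff₀ hL] at hf
        nlinarith
      · intro i _
        have : ⌈C * n / L⌉ ≤ (k : ℤ) + 1 := by omega
        rw [Int.ceil_le] at this
        push_cast at this
        rw [le_div_iff₀ hn']
        rw [div_le_iff₀ hL] at this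
        nlinarith
  refine ⟨hchar, fun a _ => ?_, fun heq a b ha hb => ?_⟩
  · -- social cost
    set k : ℕ := (Finset.univ.filter (fun i => a i = false)).card with hk
    have hkn : k ≤ n := by
      rw [hk]; simpa using Finset.card_filter_le Finset.univ (fun i => a i = false)
    have hsplit := Finset.sum_filter_add_sum_filter_not Finset.univ
      (fun i => a i = false) (actualCost (⊤ : SimpleGraph (Fin n)) C L a)
    have hfn : Finset.univ.filter (fun i => ¬ a i = false) =
        Finset.univ.filter (fun i => a i = true) := by
      apply Finset.filter_congr; intro i _; simp
    have hcardT : (Finset.univ.filter (fun i => a i = true)).card = n - k := by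
      have := Finset.card_filter_add_card_filter_not
        (s := Finset.univ (α := Fin n)) (p := fun i => a i = false)
      rw [← hk, hfn] at this
      simp only [Finset.card_univ, Fintype.card_fin] at this
      omega
    rw [socialCost, ← hsplit, hfn]
    have hT : ∑ i ∈ Finset.univ.filter (fun i => a i = true),
        actualCost (⊤ : SimpleGraph (Fin n)) C L a i = ((n : ℝ) - k) * C := by
      rw [Finset.sum_congr rfl (fun i hi =>
        cost_top_true C L a i (Finset.mem_filter.mp hi).2)]
      rw [Finset.sum_const, hcardT, nsmul_eq_mul]
      push_cast [Nat.cast_sub hkn]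
      ring
    have hF : ∑ i ∈ Finset.univ.filter (fun i => a i = false),
        actualCost (⊤ : SimpleGraph (Fin n)) C L a i = (k : ℝ) ^ 2 * L / n := by
      rw [Finset.sum_congr rfl (fun i hi =>
        cost_top_false C L a i (Finset.mem_filter.mp hi).2)]
      rw [Finset.sum_const, ← hk, nsmul_eq_mul]
      ring
    rw [hF, hT]
    ring
  · -- uniqueness
    have ha' := (hchar a).mp ha
    have hb' := (hchar b).mp hb
    have : ((Finset.univ.filter (fun i => a i = false)).card : ℤ) =
        ((Finset.univ.filter (fun i => b i = false)).card : ℤ) := by omega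
    exact_mod_cast this
end
end

section
/- In the complete graph K_n, the number of insecure players minimizing the social cost (n−k)C + k²L/n over integers k is ⌊Cn/(2L)⌋ or ⌈Cn/(2L)⌉; i.e., the socially optimal attack component size is half the (real-valued) Nash equilibrium component size Cn/L. -/
lemma aux4 (n k0 : ℕ) (L x : ℝ) (hn' : (0:ℝ) < n) (hL : 0 < L)
    (h1 : 2*x ≤ 2*(k0:ℝ)+1) (h2 : 2*(k0:ℝ)-1 ≤ 2*x) (k : ℕ) :
    ((n:ℝ) - k0)*(2*L*x/n) + (k0:ℝ)^2*L/n ≤ ((n:ℝ)-k)*(2*L*x/n) + (k:ℝ)^2*L/n := by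
  rw [← sub_nonneg]
  have heq : ((n:ℝ)-k)*(2*L*x/n) + (k:ℝ)^2*L/n - (((n:ℝ) - k0)*(2*L*x/n) + (k0:ℝ)^2*L/n)
      = ((k:ℝ) - k0)*(((k:ℝ) + k0) - 2*x)*L/n := by
    field_simp; ring
  rw [heq]
  apply div_nonneg _ hn'.le
  apply mul_nonneg _ hL.le
  rcases lt_trichotomy k k0 with h | h | h
  · have hk : (k:ℝ) + 1 ≤ k0 := by exact_mod_cast h
    nlinarith
  · subst h; simp
  · have hk : (k0:ℝ) + 1 ≤ k := by exact_mod_cast h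
    apply mul_nonneg <;> linarith

/-- In the complete graph `K_n`, the number `k` of insecure players minimizing the social cost
`(n−k)C + k²L/n` over integers `0 ≤ k ≤ n` is `⌊Cn/(2L)⌋` or `⌈Cn/(2L)⌉`. -/
theorem stmt4 (n : ℕ) (C L : ℝ) (hn : 0 < n) (hL : 0 < L)
    (hC : L / n < C) (hCL : C ≤ L) :
    ∃ k0 : ℕ, ((k0 : ℤ) = ⌊C * n / (2 * L)⌋ ∨ (k0 : ℤ) = ⌈C * n / (2 * L)⌉) ∧ k0 ≤ n ∧
      ∀ k : ℕ, k ≤ n →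
        ((n : ℝ) - k0) * C + (k0 : ℝ) ^ 2 * L / n ≤ ((n : ℝ) - k) * C + (k : ℝ) ^ 2 * L / n := by
  have hn' : (0:ℝ) < n := by exact_mod_cast hn
  set x : ℝ := C * n / (2 * L) with hxdef
  have h2L : (0:ℝ) < 2 * L := by linarith
  have hx1 : 1/2 < x := by
    rw [hxdef, lt_div_iff₀ h2L]
    have : L < C * n := by
      have := (div_lt_iff₀ hn').mp hC
      linarith
    linarith
  have hx2 : x ≤ n / 2 := by
    rw [hxdef, div_le_iff₀ h2L]
    nlinarith
  have hC' : C = 2*L*x/n := by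
    rw [hxdef]; field_simp
  have hfl : (⌊x⌋ : ℝ) ≤ x := Int.floor_le x
  have hfl1 : x < (⌊x⌋ : ℝ) + 1 := Int.lt_floor_add_one x
  by_cases hcase : x ≤ (⌊x⌋ : ℝ) + 1/2
  · have hfl0 : 0 ≤ ⌊x⌋ := Int.floor_nonneg.mpr (by linarith)
    refine ⟨⌊x⌋.toNat, Or.inl (by simp [Int.toNat_of_nonneg hfl0]), ?_, ?_⟩
    · have h : (⌊x⌋ : ℝ) ≤ n := by linarith
      have h' : ⌊x⌋ ≤ (n : ℤ) := by exact_mod_cast h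
      omega
    · intro k _
      have hk0 : ((⌊x⌋.toNat : ℕ) : ℝ) = (⌊x⌋ : ℝ) := by
        exact_mod_cast congrArg (Int.cast : ℤ → ℝ) (Int.toNat_of_nonneg hfl0)
      rw [hC']
      have := aux4 n ⌊x⌋.toNat L x hn' hL (by rw [hk0]; linarith) (by rw [hk0]; linarith) k
      exact this
  · push_neg at hcase
    have hcl : x ≤ (⌈x⌉ : ℝ) := Int.le_ceil x
    have hclf : ⌈x⌉ ≤ ⌊x⌋ + 1 := Int.ceil_le_floor_add_one x
    have hclf' : (⌈x⌉ : ℝ) ≤ (⌊x⌋ : ℝ) + 1 := by exact_mod_cast hclf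
    have hcl0 : 0 ≤ ⌈x⌉ := Int.ceil_nonneg (by linarith)
    have hn2 : (2:ℝ) ≤ n := by
      have h1 : (1:ℝ) < n := by linarith
      have : 1 < n := by exact_mod_cast h1
      exact_mod_cast this
    refine ⟨⌈x⌉.toNat, Or.inr (by simp [Int.toNat_of_nonneg hcl0]), ?_, ?_⟩
    · have h : (⌈x⌉ : ℝ) ≤ n := by linarith
      have h' : ⌈x⌉ ≤ (n : ℤ) := by exact_mod_cast h
      omega
    · intro k _
      have hk0 : ((⌈x⌉.toNat : ℕ) : ℝ) = (⌈x⌉ : ℝ) := by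
        exact_mod_cast congrArg (Int.cast : ℤ → ℝ) (Int.toNat_of_nonneg hcl0)
      rw [hC']
      exact aux4 n ⌈x⌉.toNat L x hn' hL (by rw [hk0]; linarith) (by rw [hk0]; linarith) k
end

section
/- In the complete graph K_n with friendship factor F ∈ (0,1], a friendship Nash equilibrium with k insecure players exists if and only if ⌈(Cn/L − 1)/(1 + F)⌉ ≤ k ≤ ⌊(Cn/L + F)/(1 + F)⌋; consequently there are at most two FNE, and exactly one when the ceiling equals the floor. -/
open Finset
open scoped Classical

noncomputable section

variable {V : Type*} [Fintype V] [DecidableEq V]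

section K
variable {n : ℕ}

lemma reach_set (a : Fin n → Bool) (i : Fin n) :
    {j | insecureReach (⊤ : SimpleGraph (Fin n)) (Function.update a i false) i j}
      = {j | Function.update a i false j = false} := by
  ext j
  simp only [Set.mem_setOf_eq]
  constructor
  · intro h
    induction h with
    | refl => simp
    | tail _ step _ => exact step.2.2
  · intro hj
    rcases eq_or_ne j i with rfl | hne
    · exact Relation.ReflTransGen.refl
    · exact Relation.ReflTransGen.single ⟨by simp [hne.symm], by simp, hj⟩

lemma compSize_eq (a : Fin n → Bool) (i : Fin n) :
    compSize (⊤ : SimpleGraph (Fin n)) a i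
      = (univ.filter fun j => Function.update a i false j = false).card := by
  unfold compSize
  rw [reach_set a i]
  rw [show {j | Function.update a i false j = false}
      = ((univ.filter fun j => Function.update a i false j = false : Finset (Fin n)) : Set (Fin n)) from by
    ext x; simp]
  exact Set.ncard_coe_finset _

lemma update_false_self {a : Fin n → Bool} {i : Fin n} (h : a i = false) :
    Function.update a i false = a := by
  funext j; rcases eq_or_ne j i with rfl | hne <;> simp [Function.update_apply, *]

lemma card_update_true {a : Fin n → Bool} {i : Fin n} (h : a i = true) :
    (univ.filter fun j => Function.update a i false j = false).card
      = (univ.filter fun j => a j = false).card + 1 := by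
  have hset : (univ.filter fun j => Function.update a i false j = false)
      = insert i (univ.filter fun j => a j = false) := by
    ext j; rcases eq_or_ne j i with rfl | hne <;>
      simp [Function.update_apply, *]
  rw [hset, Finset.card_insert_of_notMem (by simp [h])]

lemma card_update_erase {a : Fin n → Bool} {i : Fin n} (h : a i = false) :
    (univ.filter fun j => Function.update a i true j = false).card
      = (univ.filter fun j => a j = false).card - 1 := by
  have hset : (univ.filter fun j => Function.update a i true j = false)
      = (univ.filter fun j => a j = false).erase i := by
    ext j; rcases eq_or_ne j i with rfl | hne <;>
      simp [Function.update_apply, *]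
  rw [hset, Finset.card_erase_of_mem (by simp [h])]

lemma actualCost_eq (C L : ℝ) (a : Fin n → Bool) (i : Fin n) :
    actualCost (⊤ : SimpleGraph (Fin n)) C L a i
      = if a i = true then C
        else L * ((univ.filter fun j => a j = false).card : ℝ) / n := by
  unfold actualCost
  by_cases hi : a i = true
  · simp [hi]
  · have h : a i = false := by simpa using hi
    simp only [hi, if_false, compSize_eq, update_false_self h, Fintype.card_fin]

lemma social_eq (C L : ℝ) (a : Fin n → Bool) :
    socialCost (⊤ : SimpleGraph (Fin n)) C L a
      = ((n : ℝ) - (univ.filter fun j => a j = false).card) * C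
        + ((univ.filter fun j => a j = false).card : ℝ)
          * (L * ((univ.filter fun j => a j = false).card : ℝ) / n) := by
  unfold socialCost
  set k := (univ.filter fun j => a j = false).card with hk
  rw [Finset.sum_congr rfl (fun i _ => actualCost_eq C L a i)]
  rw [Finset.sum_ite]
  have h2 : (univ.filter fun j => ¬ a j = true) = (univ.filter fun j => a j = false) := by
    ext j; simp
  have h1 : (univ.filter fun j => a j = true).card = n - k := by
    have h3 := Finset.card_filter_add_card_filter_not (s := (univ : Finset (Fin n)))
      (p := fun j => a j = true)
    rw [h2] at h3
    simp only [Finset.card_univ, Fintype.card_fin] at h3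
    omega
  have hkn : k ≤ n := by
    have := Finset.card_filter_le (univ : Finset (Fin n)) (fun j => a j = false)
    simpa using this
  rw [h2]
  simp only [Finset.sum_const, nsmul_eq_mul, h1, ← hk]
  rw [Nat.cast_sub hkn]
  try push_cast
  try ring

lemma perceived_eq (C L F : ℝ) (a : Fin n → Bool) (i : Fin n) :
    perceivedCost (⊤ : SimpleGraph (Fin n)) C L F a i
      = actualCost (⊤ : SimpleGraph (Fin n)) C L a i
        + F * (socialCost (⊤ : SimpleGraph (Fin n)) C L a
            - actualCost (⊤ : SimpleGraph (Fin n)) C L a i) := by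
  unfold perceivedCost socialCost
  congr 1
  congr 1
  rw [← Finset.sum_erase_eq_sub (Finset.mem_univ i)]
  refine Finset.sum_congr ?_ (fun _ _ => rfl)
  ext j
  simp [ne_comm]

lemma secure_dev_iff (C L F : ℝ) (hn : 0 < n) (a : Fin n → Bool) (i : Fin n)
    (hi : a i = true) :
    (perceivedCost (⊤ : SimpleGraph (Fin n)) C L F a i
      ≤ perceivedCost (⊤ : SimpleGraph (Fin n)) C L F (Function.update a i false) i)
    ↔ C * n ≤ L * (((univ.filter fun j => a j = false).card : ℝ) * (1 + F) + 1) := by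
  have hN : (0 : ℝ) < n := by exact_mod_cast hn
  have hn' : (n : ℝ) ≠ 0 := ne_of_gt hN
  have key : perceivedCost (⊤ : SimpleGraph (Fin n)) C L F (Function.update a i false) i
      - perceivedCost (⊤ : SimpleGraph (Fin n)) C L F a i
      = (L * (((univ.filter fun j => a j = false).card : ℝ) * (1 + F) + 1) - C * n) / n := by
    rw [perceived_eq, perceived_eq, social_eq, social_eq, actualCost_eq, actualCost_eq,
        card_update_true hi, if_pos hi,
        if_neg (by simp : ¬ Function.update a i false i = true)]
    push_cast
    field_simp
    ring
  rw [← sub_nonneg, key, le_div_iff₀ hN, zero_mul, sub_nonneg]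

lemma insecure_dev_iff (C L F : ℝ) (hn : 0 < n) (a : Fin n → Bool) (i : Fin n)
    (hi : a i = false) :
    (perceivedCost (⊤ : SimpleGraph (Fin n)) C L F a i
      ≤ perceivedCost (⊤ : SimpleGraph (Fin n)) C L F (Function.update a i true) i)
    ↔ L * (((univ.filter fun j => a j = false).card : ℝ) * (1 + F) - F) ≤ C * n := by
  have hN : (0 : ℝ) < n := by exact_mod_cast hn
  have hn' : (n : ℝ) ≠ 0 := ne_of_gt hN
  have hk1 : 1 ≤ (univ.filter fun j => a j = false).card :=
    Finset.card_pos.mpr ⟨i, by simp [hi]⟩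
  have key : perceivedCost (⊤ : SimpleGraph (Fin n)) C L F (Function.update a i true) i
      - perceivedCost (⊤ : SimpleGraph (Fin n)) C L F a i
      = (C * n - L * (((univ.filter fun j => a j = false).card : ℝ) * (1 + F) - F)) / n := by
    rw [perceived_eq, perceived_eq, social_eq, social_eq, actualCost_eq, actualCost_eq,
        card_update_erase hi, Nat.cast_sub hk1,
        if_pos (by simp : Function.update a i true i = true),
        if_neg (by simp [hi] : ¬ a i = true)]
    push_cast
    field_simp
    ring
  rw [← sub_nonneg, key, le_div_iff₀ hN, zero_mul, sub_nonneg]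
end K

/-- Lemma (friendship Nash equilibria of the complete graph `K_n`): for `F ∈ (0,1]`, a profile
with `k` insecure players is an FNE iff `⌈(Cn/L − 1)/(1+F)⌉ ≤ k ≤ ⌊(Cn/L + F)/(1+F)⌋`
(hence there are at most two FNE), and if the ceiling equals the floor then all FNE have the
same number of insecure players. -/
theorem stmt5 (n : ℕ) (C L F : ℝ) (hn : 0 < n) (hL : 0 < L)
    (hC : L / n < C) (hCL : C ≤ L) (hF0 : 0 < F) (hF1 : F ≤ 1) :
    (∀ a : Fin n → Bool,
      isFNE (⊤ : SimpleGraph (Fin n)) C L F a ↔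
        (⌈(C * n / L - 1) / (1 + F)⌉ ≤ ((Finset.univ.filter (fun i => a i = false)).card : ℤ) ∧
         ((Finset.univ.filter (fun i => a i = false)).card : ℤ) ≤ ⌊(C * n / L + F) / (1 + F)⌋)) ∧
    (⌈(C * n / L - 1) / (1 + F)⌉ = ⌊(C * n / L + F) / (1 + F)⌋ →
      ∀ a b : Fin n → Bool, isFNE (⊤ : SimpleGraph (Fin n)) C L F a →
        isFNE (⊤ : SimpleGraph (Fin n)) C L F b →
        (Finset.univ.filter (fun i => a i = false)).card =
          (Finset.univ.filter (fun i => b i = false)).card) := by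
  classical
  have hN : (0:ℝ) < n := by exact_mod_cast hn
  have hn' : (n:ℝ) ≠ 0 := ne_of_gt hN
  have hF' : (0:ℝ) < 1 + F := by linarith
  have hn2 : 2 ≤ n := by
    by_contra h
    push_neg at h
    have hn1 : n = 1 := by omega
    subst hn1
    norm_num at hC
    linarith
  have hCnL : L < C * n := by
    rw [div_lt_iff₀ hN] at hC
    linarith
  have ceil_iff : ∀ k : ℕ, (⌈(C * n / L - 1) / (1 + F)⌉ ≤ (k : ℤ)) ↔
      C * n ≤ L * ((k : ℝ) * (1 + F) + 1) := by
    intro k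
    rw [Int.ceil_le]
    push_cast
    rw [div_le_iff₀ hF', sub_le_iff_le_add, div_le_iff₀ hL]
    constructor <;> intro h <;> linarith
  have floor_iff : ∀ k : ℕ, ((k : ℤ) ≤ ⌊(C * n / L + F) / (1 + F)⌋) ↔
      L * ((k : ℝ) * (1 + F) - F) ≤ C * n := by
    intro k
    rw [Int.le_floor]
    push_cast
    rw [le_div_iff₀ hF', ← sub_le_iff_le_add, le_div_iff₀ hL]
    constructor <;> intro h <;> linarith
  have main : ∀ a : Fin n → Bool,
      isFNE (⊤ : SimpleGraph (Fin n)) C L F a ↔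
        (⌈(C * n / L - 1) / (1 + F)⌉ ≤ ((Finset.univ.filter (fun i => a i = false)).card : ℤ) ∧
         ((Finset.univ.filter (fun i => a i = false)).card : ℤ) ≤ ⌊(C * n / L + F) / (1 + F)⌋) := by
    intro a
    set k := (Finset.univ.filter (fun i => a i = false)).card with hkdef
    constructor
    · intro hfne
      have hsec : ∀ i, a i = true → C * n ≤ L * ((k : ℝ) * (1 + F) + 1) :=
        fun i h => (secure_dev_iff C L F hn a i h).mp (hfne i false)
      have hins : ∀ i, a i = false → L * ((k : ℝ) * (1 + F) - F) ≤ C * n :=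
        fun i h => (insecure_dev_iff C L F hn a i h).mp (hfne i true)
      have hk1 : 1 ≤ k := by
        by_contra h
        push_neg at h
        have hk0 : k = 0 := by omega
        have hi : a ⟨0, hn⟩ = true := by
          by_contra hh
          have hf : a ⟨0, hn⟩ = false := by simpa using hh
          have hm : (⟨0, hn⟩ : Fin n) ∈ Finset.univ.filter (fun j => a j = false) := by
            simp [hf]
          have := Finset.card_pos.mpr ⟨_, hm⟩
          omega
        have hb := hsec _ hi
        rw [hk0] at hb
        norm_num at hb
        linarith
      obtain ⟨i, hi⟩ := Finset.card_pos.mp (by omega : 0 < k)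
      have hifalse : a i = false := by simpa using (Finset.mem_filter.mp hi).2
      have hB := hins i hifalse
      have hkn : k ≤ n := by
        simpa using Finset.card_filter_le (Finset.univ : Finset (Fin n)) (fun j => a j = false)
      have hkltn : k < n := by
        rcases lt_or_eq_of_le hkn with h | h
        · exact h
        · exfalso
          rw [h] at hB
          have hCn : C * (n:ℝ) ≤ L * n := by nlinarith
          have h2n : (2:ℝ) ≤ n := by exact_mod_cast hn2
          nlinarith [mul_pos hL hF0]
      have hpos : 0 < (Finset.univ.filter fun j => a j = true).card := by
        have h3 := Finset.card_filter_add_card_filter_not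
          (s := (Finset.univ : Finset (Fin n))) (p := fun j => a j = true)
        have h2 : (Finset.univ.filter fun j => ¬ a j = true)
            = (Finset.univ.filter fun j => a j = false) := by ext j; simp
        rw [h2] at h3
        simp only [Finset.card_univ, Fintype.card_fin] at h3
        omega
      obtain ⟨i2, hi2⟩ := Finset.card_pos.mp hpos
      have hA := hsec i2 (by simpa using (Finset.mem_filter.mp hi2).2)
      exact ⟨(ceil_iff k).mpr hA, (floor_iff k).mpr hB⟩
    · rintro ⟨h1, h2⟩
      have hA := (ceil_iff k).mp h1
      have hB := (floor_iff k).mp h2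
      intro i b
      rcases hab : a i with _ | _
      · cases b
        · rw [show Function.update a i false = a from by
            rw [← hab]; exact Function.update_eq_self i a]
        · exact (insecure_dev_iff C L F hn a i hab).mpr hB
      · cases b
        · exact (secure_dev_iff C L F hn a i hab).mpr hA
        · rw [show Function.update a i true = a from by
            rw [← hab]; exact Function.update_eq_self i a]
  refine ⟨main, ?_⟩
  intro heq a b hfa hfb
  obtain ⟨ha1, ha2⟩ := (main a).mp hfa
  obtain ⟨hb1, hb2⟩ := (main b).mp hfb
  rw [heq] at ha1 hb1
  omega
end
end

section
/- For the virus inoculation game on the complete graph K_n, the Windfall of Friendship satisfies Υ(F,I) ≤ 1/(1 − C/(4L)) ≤ 4/3 for all F ∈ [0,1] and all n; moreover this bound is tight: for C = L, even n, and F = 1, the unique FNE has cost 3nL/4 while the worst NE has cost nL, so Υ(1,I) = 4/3. -/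
open Finset
open scoped Classical

/-!
On `K_n` all insecure players form one attack component, so a profile matters only through the
number `k` of insecure players: the social cost is `(n - k) C + k² L / n`, and the (friendship)
equilibrium conditions become linear inequalities in `k`. In an NE with `k > 0` an insecure player
pays `L k / n ≤ C`, so every NE costs at most `n C`; completing the square in `k` shows that every
profile costs at least `n C (1 - C / (4 L))`. For `C = L`, `F = 1` and `n = 2 m` the FNE conditions
force `k = m`, of cost `3 n L / 4`, while the all-insecure profile is an NE of cost `n L`.
-/

section CompleteGraph

variable {V : Type*} {C L F : ℝ} {a : V → Bool} {i : V}

theorem insecureReach_top_iff {j : V} :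
    insecureReach ⊤ a i j ↔ j = i ∨ a i = false ∧ a j = false := by
  constructor
  · intro h
    induction h with
    | refl => exact Or.inl rfl
    | tail _ hstep ih => exact Or.inr ⟨ih.elim (· ▸ hstep.2.1) And.left, hstep.2.2⟩
  · rintro (rfl | ⟨hi, hj⟩)
    · exact .refl
    · by_cases hij : i = j
      · exact hij ▸ .refl
      · exact .single ⟨hij, hi, hj⟩

theorem forall_update_le_iff [DecidableEq V] {f : (V → Bool) → V → ℝ} :
    (∀ i b, f a i ≤ f (Function.update a i b) i) ↔
      ∀ i, f a i ≤ f (Function.update a i (!a i)) i :=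
  forall_congr' fun i => ⟨fun h => h _, fun h b => by
    rcases Bool.eq_or_eq_not b (a i) with rfl | rfl
    · rw [Function.update_eq_self]
    · exact h⟩

variable [Fintype V]

def insecureCount (a : V → Bool) : ℕ := #{i | a i = false}

theorem exists_insecure_iff : (∃ i, a i = false) ↔ 0 < insecureCount a := by
  simp [insecureCount, card_pos, Finset.Nonempty]

theorem exists_secure_iff : (∃ i, a i = true) ↔ insecureCount a < Fintype.card V := by
  simp [insecureCount, card_lt_iff_ne_univ, filter_eq_self]

variable [DecidableEq V]

theorem compSize_top : compSize ⊤ a i = insecureCount (Function.update a i false) := by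
  have : {j | insecureReach ⊤ (Function.update a i false) i j} =
      ↑(filter (fun j => Function.update a i false j = false) univ) := by
    ext j
    by_cases hj : j = i <;> simp [insecureReach_top_iff, hj]
  rw [compSize, this, Set.ncard_coe_finset, insecureCount]

theorem insecureCount_update_false (hi : a i = true) :
    insecureCount (Function.update a i false) = insecureCount a + 1 := by
  have : filter (fun j => Function.update a i false j = false) univ =
      insert i (filter (fun j => a j = false) univ) := by
    ext j
    by_cases hj : j = i <;> simp [hj]
  rw [insecureCount, this, card_insert_of_notMem (by simp [hi]), insecureCount]

theorem insecureCount_update_true (hi : a i = false) :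
    insecureCount (Function.update a i true) + 1 = insecureCount a := by
  have : filter (fun j => Function.update a i true j = false) univ =
      erase (filter (fun j => a j = false) univ) i := by
    ext j
    by_cases hj : j = i <;> simp [hj]
  rw [insecureCount, this, card_erase_add_one (by simp [hi]), insecureCount]

theorem actualCost_top :
    actualCost ⊤ C L a i = if a i then C else L * insecureCount a / Fintype.card V := by
  cases hi : a i
  · rw [actualCost, compSize_top, ← hi, Function.update_eq_self, hi]
  · simp [actualCost, hi]

theorem socialCost_top :
    socialCost ⊤ C L a = (Fintype.card V - insecureCount a) * C
      + insecureCount a * (L * insecureCount a / Fintype.card V) := by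
  have hcard : #{i | a i = true} + insecureCount a = Fintype.card V := by
    simpa [insecureCount] using card_filter_add_card_filter_not (s := univ) (a · = true)
  rw [socialCost, Finset.sum_congr rfl fun i _ => actualCost_top, sum_ite, sum_const, sum_const,
    ← hcard]
  simp [insecureCount]

theorem perceivedCost_top : perceivedCost ⊤ C L F a i =
    actualCost ⊤ C L a i + F * (socialCost ⊤ C L a - actualCost ⊤ C L a i) := by
  rw [perceivedCost, socialCost, ← sum_erase_eq_sub (mem_univ i)]
  congr 3
  ext j
  simp [ne_comm]

theorem isFNE_zero {G : SimpleGraph V} : isFNE G C L 0 a ↔ isNE G C L a := by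
  simp [isFNE, isNE, perceivedCost]

theorem perceivedCost_top_update_not_sub :
    perceivedCost ⊤ C L F (Function.update a i (!a i)) i - perceivedCost ⊤ C L F a i =
      if a i then L * (insecureCount a + 1 + F * insecureCount a) / Fintype.card V - C
      else C - L * (insecureCount a + F * (insecureCount a - 1)) / Fintype.card V := by
  cases hi : a i
  · simp only [Bool.not_false, perceivedCost_top, actualCost_top, socialCost_top,
      Function.update_self, hi]
    rw [← insecureCount_update_true hi]
    push_cast
    ring
  · simp only [Bool.not_true, perceivedCost_top, actualCost_top, socialCost_top,
      Function.update_self, hi, insecureCount_update_false hi]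
    push_cast
    ring

theorem isFNE_top_iff : isFNE ⊤ C L F a ↔
    (0 < insecureCount a →
      L * (insecureCount a + F * (insecureCount a - 1)) / Fintype.card V ≤ C) ∧
    (insecureCount a < Fintype.card V →
      C ≤ L * (insecureCount a + 1 + F * insecureCount a) / Fintype.card V) := by
  rw [isFNE, forall_update_le_iff (f := perceivedCost ⊤ C L F)]
  simp only [← sub_nonneg (b := perceivedCost _ _ _ _ _ _), perceivedCost_top_update_not_sub,
    ← exists_insecure_iff, ← exists_secure_iff, forall_exists_index, ← forall_and]
  refine forall_congr' fun i => ?_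
  cases a i <;> simp

theorem isNE_top_iff : isNE ⊤ C L a ↔
    (0 < insecureCount a → L * insecureCount a / Fintype.card V ≤ C) ∧
    (insecureCount a < Fintype.card V → C ≤ L * (insecureCount a + 1) / Fintype.card V) := by
  simp [← isFNE_zero, isFNE_top_iff]

theorem exists_insecureCount_eq {m : ℕ} (hm : m ≤ Fintype.card V) :
    ∃ a : V → Bool, insecureCount a = m := by
  obtain ⟨t, -, ht⟩ := exists_subset_card_eq (s := univ) hm
  exact ⟨fun i => decide (i ∉ t), by simpa [insecureCount] using ht⟩

theorem socialCost_top_le_of_isNE (h : isNE ⊤ C L a) :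
    socialCost ⊤ C L a ≤ Fintype.card V * C := by
  rw [socialCost_top]
  rcases (insecureCount a).eq_zero_or_pos with h0 | hpos
  · simp [h0]
  · have := mul_le_mul_of_nonneg_left ((isNE_top_iff.1 h).1 hpos)
      (Nat.cast_nonneg (α := ℝ) (insecureCount a))
    linarith

theorem le_socialCost_top [Nonempty V] (hL : 0 < L) :
    Fintype.card V * C * (1 - C / (4 * L)) ≤ socialCost ⊤ C L a := by
  have hn : (0 : ℝ) < Fintype.card V := Nat.cast_pos.2 Fintype.card_pos
  have hgap : socialCost ⊤ C L a - Fintype.card V * C * (1 - C / (4 * L)) =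
      L / Fintype.card V * (insecureCount a - C * Fintype.card V / (2 * L)) ^ 2 := by
    rw [socialCost_top]
    field_simp
    ring
  rw [← sub_nonneg, hgap]
  positivity

noncomputable def worstNECost (G : SimpleGraph V) (C L : ℝ) : ℝ :=
  sSup {c | ∃ a : V → Bool, isNE G C L a ∧ c = socialCost G C L a}

noncomputable def worstFNECost (G : SimpleGraph V) (C L F : ℝ) : ℝ :=
  sSup {c | ∃ a : V → Bool, isFNE G C L F a ∧ c = socialCost G C L a}

/-- The Windfall of Friendship `Υ(F, I)`. -/
noncomputable def windfall (G : SimpleGraph V) (C L F : ℝ) : ℝ :=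
  worstNECost G C L / worstFNECost G C L F

theorem bddAbove_socialCost (G : SimpleGraph V) (P : (V → Bool) → Prop) :
    BddAbove {c | ∃ a : V → Bool, P a ∧ c = socialCost G C L a} :=
  ((Set.finite_range (socialCost G C L)).subset
    (by rintro _ ⟨a, -, rfl⟩; exact ⟨a, rfl⟩)).bddAbove

theorem worstNECost_top_le (hC : 0 ≤ C) :
    worstNECost (⊤ : SimpleGraph V) C L ≤ Fintype.card V * C :=
  Real.sSup_le (by rintro _ ⟨a, ha, rfl⟩; exact socialCost_top_le_of_isNE ha) (by positivity)

theorem le_worstFNECost_top [Nonempty V] (hL : 0 < L) (h : isFNE ⊤ C L F a) :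
    Fintype.card V * C * (1 - C / (4 * L)) ≤ worstFNECost (⊤ : SimpleGraph V) C L F :=
  le_csSup_of_le (bddAbove_socialCost ⊤ _) ⟨a, h, rfl⟩ (le_socialCost_top hL)

theorem windfall_top_le [Nonempty V] (hL : 0 < L) (hC : 0 < C) (hCL : C < 4 * L) :
    windfall (⊤ : SimpleGraph V) C L F ≤ 1 / (1 - C / (4 * L)) := by
  have ht : 0 < 1 - C / (4 * L) := by rw [sub_pos, div_lt_one (by positivity)]; exact hCL
  by_cases hex : ∃ a : V → Bool, isFNE ⊤ C L F a
  · obtain ⟨a, ha⟩ := hex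
    calc windfall (⊤ : SimpleGraph V) C L F
        ≤ Fintype.card V * C / (Fintype.card V * C * (1 - C / (4 * L))) :=
          div_le_div₀ (by positivity) (worstNECost_top_le hC.le) (by positivity)
            (le_worstFNECost_top hL ha)
      _ = 1 / (1 - C / (4 * L)) := by field_simp
  · -- with no FNE the worst FNE cost is `sSup ∅ = 0`, and `x / 0 = 0`
    have : worstFNECost (⊤ : SimpleGraph V) C L F = 0 := by
      simp_all [worstFNECost]
    rw [windfall, this, div_zero]
    positivity

theorem isFNE_top_tight_iff {m : ℕ} (hL : 0 < L) (hm : 0 < m) (hV : Fintype.card V = m + m) :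
    isFNE ⊤ L L 1 a ↔ insecureCount a = m := by
  have hn : (0 : ℝ) < Fintype.card V := by rw [hV]; positivity
  have hV' : (Fintype.card V : ℝ) = m + m := by exact_mod_cast hV
  rw [isFNE_top_iff, div_le_iff₀ hn, le_div_iff₀ hn, mul_le_mul_iff_right₀ hL,
    mul_le_mul_iff_right₀ hL, hV', one_mul, one_mul]
  constructor
  · rintro ⟨h1, h2⟩
    by_contra hne
    rcases Nat.lt_or_gt_of_ne hne with hlt | hgt
    · have : (insecureCount a : ℝ) + 1 ≤ m := by exact_mod_cast hlt
      linarith [h2 (by omega)]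
    · have : (m : ℝ) + 1 ≤ insecureCount a := by exact_mod_cast hgt
      linarith [h1 (by omega)]
  · intro ha
    rw [ha]
    constructor <;> intro <;> linarith

theorem socialCost_top_tight {m : ℕ} (hm : 0 < m) (hV : Fintype.card V = m + m)
    (ha : insecureCount a = m) : socialCost ⊤ L L a = 3 * Fintype.card V * L / 4 := by
  rw [socialCost_top, ha, hV]
  push_cast
  field_simp
  ring

theorem worstFNECost_top_tight {m : ℕ} (hL : 0 < L) (hm : 0 < m) (hV : Fintype.card V = m + m) :
    worstFNECost (⊤ : SimpleGraph V) L L 1 = 3 * Fintype.card V * L / 4 := by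
  refine IsGreatest.csSup_eq ⟨?_, ?_⟩
  · obtain ⟨a, ha⟩ := exists_insecureCount_eq (V := V) (m := m) (by omega)
    exact ⟨a, (isFNE_top_tight_iff hL hm hV).2 ha, (socialCost_top_tight hm hV ha).symm⟩
  · rintro _ ⟨a, ha, rfl⟩
    exact (socialCost_top_tight hm hV ((isFNE_top_tight_iff hL hm hV).1 ha)).le

theorem worstNECost_top_self [Nonempty V] (hL : 0 < L) :
    worstNECost (⊤ : SimpleGraph V) L L = Fintype.card V * L := by
  have hn : (0 : ℝ) < Fintype.card V := Nat.cast_pos.2 Fintype.card_pos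
  have hall : insecureCount (fun _ : V => false) = Fintype.card V := by simp [insecureCount]
  refine IsGreatest.csSup_eq ⟨⟨fun _ => false, ?_, ?_⟩, ?_⟩
  · rw [isNE_top_iff, hall, mul_div_assoc, div_self hn.ne', mul_one]
    exact ⟨fun _ => le_rfl, fun h => absurd h (lt_irrefl _)⟩
  · rw [socialCost_top, hall]
    field_simp
    ring
  · rintro _ ⟨a, ha, rfl⟩
    exact socialCost_top_le_of_isNE ha

theorem windfall_top_tight {m : ℕ} (hL : 0 < L) (hm : 0 < m) (hV : Fintype.card V = m + m) :
    windfall (⊤ : SimpleGraph V) L L 1 = 4 / 3 := by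
  have : Nonempty V := Fintype.card_pos_iff.1 (by omega)
  rw [windfall, worstFNECost_top_tight hL hm hV, worstNECost_top_self hL]
  field_simp

end CompleteGraph

theorem stmt6_general (n : ℕ) (C L F : ℝ) (hn : 0 < n) (hL : 0 < L)
    (hC : L / n < C) (hCL : C ≤ L) :
    (sSup {c | ∃ a : Fin n → Bool, isNE (⊤ : SimpleGraph (Fin n)) C L a ∧
          c = socialCost (⊤ : SimpleGraph (Fin n)) C L a} /
        sSup {c | ∃ a : Fin n → Bool, isFNE (⊤ : SimpleGraph (Fin n)) C L F a ∧
          c = socialCost (⊤ : SimpleGraph (Fin n)) C L a} ≤ 1 / (1 - C / (4 * L)) ∧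
      1 / (1 - C / (4 * L)) ≤ 4 / 3) ∧
    (C = L → Even n → F = 1 →
      sSup {c | ∃ a : Fin n → Bool, isFNE (⊤ : SimpleGraph (Fin n)) C L F a ∧
          c = socialCost (⊤ : SimpleGraph (Fin n)) C L a} = 3 * n * L / 4 ∧
      sSup {c | ∃ a : Fin n → Bool, isNE (⊤ : SimpleGraph (Fin n)) C L a ∧
          c = socialCost (⊤ : SimpleGraph (Fin n)) C L a} = n * L ∧
      sSup {c | ∃ a : Fin n → Bool, isNE (⊤ : SimpleGraph (Fin n)) C L a ∧
          c = socialCost (⊤ : SimpleGraph (Fin n)) C L a} /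
        sSup {c | ∃ a : Fin n → Bool, isFNE (⊤ : SimpleGraph (Fin n)) C L F a ∧
          c = socialCost (⊤ : SimpleGraph (Fin n)) C L a} = 4 / 3) := by
  have : Nonempty (Fin n) := Fin.pos_iff_nonempty.1 hn
  have hC0 : 0 < C := (div_pos hL (Nat.cast_pos.2 hn)).trans hC
  refine ⟨⟨windfall_top_le hL hC0 (by linarith), ?_⟩, ?_⟩
  · have : C / (4 * L) ≤ 1 / 4 := by rw [div_le_iff₀ (by positivity)]; linarith
    rw [div_le_div_iff₀ (by linarith) (by norm_num)]
    linarith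
  · rintro rfl ⟨m, rfl⟩ rfl
    have hm : 0 < m := by omega
    have hV : Fintype.card (Fin (m + m)) = m + m := Fintype.card_fin _
    refine ⟨?_, ?_, windfall_top_tight hC0 hm hV⟩
    · simpa [hV, worstFNECost] using worstFNECost_top_tight hC0 hm hV
    · simpa [hV, worstNECost] using worstNECost_top_self (V := Fin (m + m)) hC0

/-- Theorem (Windfall of Friendship on `K_n` is at most `4/3`, tightly): for all `F ∈ [0,1]` and
all `n`, the worst-NE cost divided by the worst-FNE cost is at most `1/(1 − C/(4L)) ≤ 4/3`;
and for `C = L`, even `n` and `F = 1` the worst FNE costs `3nL/4` while the worst NE costs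
`nL`, so the ratio `4/3` is attained. -/
theorem stmt6 (n : ℕ) (C L F : ℝ) (hn : 0 < n) (hL : 0 < L)
    (hC : L / n < C) (hCL : C ≤ L) (hF0 : 0 ≤ F) (hF1 : F ≤ 1) :
    (sSup {c | ∃ a : Fin n → Bool, isNE (⊤ : SimpleGraph (Fin n)) C L a ∧
          c = socialCost (⊤ : SimpleGraph (Fin n)) C L a} /
        sSup {c | ∃ a : Fin n → Bool, isFNE (⊤ : SimpleGraph (Fin n)) C L F a ∧
          c = socialCost (⊤ : SimpleGraph (Fin n)) C L a} ≤ 1 / (1 - C / (4 * L)) ∧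
      1 / (1 - C / (4 * L)) ≤ 4 / 3) ∧
    (C = L → Even n → F = 1 →
      sSup {c | ∃ a : Fin n → Bool, isFNE (⊤ : SimpleGraph (Fin n)) C L F a ∧
          c = socialCost (⊤ : SimpleGraph (Fin n)) C L a} = 3 * n * L / 4 ∧
      sSup {c | ∃ a : Fin n → Bool, isNE (⊤ : SimpleGraph (Fin n)) C L a ∧
          c = socialCost (⊤ : SimpleGraph (Fin n)) C L a} = n * L ∧
      sSup {c | ∃ a : Fin n → Bool, isNE (⊤ : SimpleGraph (Fin n)) C L a ∧
          c = socialCost (⊤ : SimpleGraph (Fin n)) C L a} /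
        sSup {c | ∃ a : Fin n → Bool, isFNE (⊤ : SimpleGraph (Fin n)) C L F a ∧
          c = socialCost (⊤ : SimpleGraph (Fin n)) C L a} = 4 / 3) :=
  stmt6_general n C L F hn hL hC hCL
end

section
/- In the star graph S_n there are at most three pure Nash equilibria: (1) only the center secure, with cost C + (n−1)L/n; (2) the center insecure together with ⌈Cn/L⌉ − 2 insecure leaves (cost C(n − ⌈Cn/L⌉ + 1) + (L/n)(⌈Cn/L⌉ − 1)²); and (3) the center insecure together with ⌊Cn/L⌋ − 1 insecure leaves (cost C(n − ⌊Cn/L⌋) + (L/n)⌊Cn/L⌋²). If Cn/L ∉ ℕ, at most two of these are distinct. -/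
open Finset
open scoped Classical

noncomputable section

variable {V : Type*} [Fintype V] [DecidableEq V]

lemma adj_starG {n : ℕ} {i j : Fin n} :
    (starG n).Adj i j ↔ i ≠ j ∧ (i.val = 0 ∨ j.val = 0) := by
  simp [starG]

lemma reach_false {n : ℕ} {b : Fin n → Bool} {i j : Fin n} (hi : b i = false)
    (h : insecureReach (starG n) b i j) : b j = false := by
  induction h with
  | refl => exact hi
  | tail _ h _ => exact h.2.2

lemma comp_center_secure {n : ℕ} (hn : 0 < n) {b : Fin n → Bool} (hc : b ⟨0, hn⟩ = true)
    {i : Fin n} (hi : i.val ≠ 0) :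
    {j | insecureReach (starG n) b i j} = {i} := by
  ext j
  simp only [Set.mem_setOf_eq, Set.mem_singleton_iff]
  constructor
  · intro h
    induction h with
    | refl => rfl
    | tail _ hstep ih =>
        subst ih
        rcases adj_starG.mp hstep.1 with ⟨_, h0 | h0⟩
        · exact absurd h0 hi
        · have hy : _ = (⟨0, hn⟩ : Fin n) := Fin.ext h0
          rw [hy] at hstep
          rw [hstep.2.2] at hc; exact absurd hc (by simp)
  · rintro rfl; exact Relation.ReflTransGen.refl

lemma comp_center_insecure {n : ℕ} (hn : 0 < n) {b : Fin n → Bool} (hc : b ⟨0, hn⟩ = false)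
    {i : Fin n} (hi : b i = false) :
    {j | insecureReach (starG n) b i j} = {j | b j = false} := by
  ext j
  simp only [Set.mem_setOf_eq]
  constructor
  · exact reach_false hi
  · intro hj
    have hic : insecureReach (starG n) b i ⟨0, hn⟩ := by
      by_cases h : i = ⟨0, hn⟩
      · subst h; exact Relation.ReflTransGen.refl
      · exact Relation.ReflTransGen.single ⟨adj_starG.mpr ⟨h, Or.inr rfl⟩, hi, hc⟩
    refine hic.trans ?_
    by_cases h : j = (⟨0, hn⟩ : Fin n)
    · subst h; exact Relation.ReflTransGen.refl
    · exact Relation.ReflTransGen.single ⟨adj_starG.mpr ⟨Ne.symm h, Or.inl rfl⟩, hc, hj⟩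

lemma ncard_false {n : ℕ} (b : Fin n → Bool) :
    {j | b j = false}.ncard = (univ.filter (fun j => b j = false)).card := by
  rw [Set.ncard_eq_toFinset_card']; simp

/-- compSize at an insecure vertex when the center is insecure. -/
lemma compSize_insecure {n : ℕ} (hn : 0 < n) {a : Fin n → Bool} (hc : a ⟨0, hn⟩ = false)
    {i : Fin n} (hi : a i = false) :
    compSize (starG n) a i = (univ.filter (fun j => a j = false)).card := by
  have h1 : Function.update a i false = a := by rw [← hi, Function.update_eq_self]
  rw [compSize, h1, comp_center_insecure hn hc hi, ncard_false]

lemma card_split {n : ℕ} (hn : 0 < n) (a : Fin n → Bool) (hc : a ⟨0, hn⟩ = false) :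
    (univ.filter (fun j => a j = false)).card
      = (univ.filter (fun i => a i = false ∧ i.val ≠ 0)).card + 1 := by
  have h : univ.filter (fun j => a j = false)
      = insert (⟨0, hn⟩ : Fin n) (univ.filter (fun i => a i = false ∧ i.val ≠ 0)) := by
    ext j
    simp only [Finset.mem_filter, Finset.mem_univ, true_and, Finset.mem_insert]
    constructor
    · intro hj
      by_cases h0 : j.val = 0
      · exact Or.inl (Fin.ext h0)
      · exact Or.inr ⟨hj, h0⟩
    · rintro (rfl | ⟨hj, _⟩)
      · exact hc
      · exact hj
  rw [h, Finset.card_insert_of_notMem (by simp)]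

/-- Lemma (Nash equilibria of the star `S_n`, at most three): every pure NE either is the
profile where only the center is secure (cost `C + (n−1)L/n`), or has an insecure center and a
number `n₀` of insecure leaves equal to `⌈Cn/L⌉ − 2` (cost `C(n − ⌈Cn/L⌉ + 1) + (L/n)(⌈Cn/L⌉ − 1)²`)
or to `⌊Cn/L⌋ − 1` (cost `C(n − ⌊Cn/L⌋) + (L/n)⌊Cn/L⌋²`). Moreover if `Cn/L` is not an
integer, the latter two possibilities coincide, so at most two equilibria are distinct. -/
theorem stmt8 (n : ℕ) (C L : ℝ) (hn : 0 < n) (hL : 0 < L)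
    (hC : L / n < C) (hCL : C ≤ L) :
    (∀ a : Fin n → Bool, isNE (starG n) C L a →
      (a = (fun i => i.val == 0) ∧
        socialCost (starG n) C L a = C + ((n : ℝ) - 1) * L / n) ∨
      (a ⟨0, hn⟩ = false ∧
        ((((Finset.univ.filter (fun i => a i = false ∧ i.val ≠ 0)).card : ℤ) = ⌈C * n / L⌉ - 2 ∧
            socialCost (starG n) C L a =
              C * ((n : ℝ) - (⌈C * n / L⌉ : ℝ) + 1) + L / n * ((⌈C * n / L⌉ : ℝ) - 1) ^ 2) ∨
         (((Finset.univ.filter (fun i => a i = false ∧ i.val ≠ 0)).card : ℤ) = ⌊C * n / L⌋ - 1 ∧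
            socialCost (starG n) C L a =
              C * ((n : ℝ) - (⌊C * n / L⌋ : ℝ)) + L / n * ((⌊C * n / L⌋ : ℝ)) ^ 2)))) ∧
    ((¬ ∃ m : ℤ, C * n / L = (m : ℝ)) → ⌈C * n / L⌉ - 2 = ⌊C * n / L⌋ - 1) := by
  have hn' : (0 : ℝ) < n := by exact_mod_cast hn
  set c : Fin n := ⟨0, hn⟩ with hcdef
  set x : ℝ := C * n / L with hxdef
  constructor
  · intro a hNE
    have hcard : Fintype.card (Fin n) = n := Fintype.card_fin n
    by_cases hac : a c = true
    · -- center secure: all leaves must be insecure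
      left
      have hleaf : ∀ i : Fin n, i.val ≠ 0 → a i = false := by
        intro i hi
        by_contra hit
        have hit : a i = true := by
          cases h : a i
          · exact absurd h hit
          · rfl
        have := hNE i false
        rw [actualCost, if_pos hit] at this
        have hui : Function.update a i false i = false := Function.update_self i false a
        rw [actualCost, if_neg (by simp [hui])] at this
        have hb : Function.update (Function.update a i false) i false
            = Function.update a i false := by simp
        have hbc : Function.update a i false c = true := by
          rw [Function.update_of_ne (by intro h; apply hi; rw [← h])]
          exact hac
        have hcs : compSize (starG n) (Function.update a i false) i = 1 := by
          rw [compSize, hb, comp_center_secure hn hbc hi, Set.ncard_singleton]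
        rw [hcs, hcard] at this
        simp only [Nat.cast_one, mul_one] at this
        linarith
      have ha : a = (fun i => i.val == 0) := by
        funext i
        by_cases h0 : i.val = 0
        · have : i = c := Fin.ext h0
          rw [this, hac]; simp [h0, hcdef]
        · rw [hleaf i h0]; simp [h0]
      refine ⟨ha, ?_⟩
      have hcost : ∀ i : Fin n, actualCost (starG n) C L a i = if i = c then C else L / n := by
        intro i
        by_cases h : i = c
        · rw [if_pos h, h, actualCost, if_pos hac]
        · have hi0 : i.val ≠ 0 := fun h0 => h (Fin.ext h0)
          have hif : a i = false := hleaf i hi0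
          have h1 : Function.update a i false = a := by rw [← hif, Function.update_eq_self]
          rw [if_neg h, actualCost, if_neg (by simp [hif]), compSize, h1,
            comp_center_secure hn hac hi0, Set.ncard_singleton, hcard]
          simp
      rw [socialCost, Finset.sum_congr rfl (fun i _ => hcost i),
        ← Finset.add_sum_erase univ _ (Finset.mem_univ c), if_pos rfl]
      have : ∑ i ∈ univ.erase c, (if i = c then C else L / n) = ((n : ℝ) - 1) * (L / n) := by
        rw [Finset.sum_congr rfl (fun i hi => if_neg (Finset.ne_of_mem_erase hi)),
          Finset.sum_const, Finset.card_erase_of_mem (Finset.mem_univ c), Finset.card_univ, hcard,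
          nsmul_eq_mul, Nat.cast_sub hn, Nat.cast_one]
      rw [this]; ring
    · -- center insecure
      right
      have hac : a c = false := by
        cases h : a c
        · rfl
        · exact absurd h hac
      refine ⟨hac, ?_⟩
      set n₀ : ℕ := (univ.filter (fun i => a i = false ∧ i.val ≠ 0)).card with hn₀
      have hS : (univ.filter (fun j => a j = false)).card = n₀ + 1 := card_split hn a hac
      -- cost of any insecure vertex
      have hcostf : ∀ i : Fin n, a i = false →
          actualCost (starG n) C L a i = L * (n₀ + 1) / n := by
        intro i hi
        rw [actualCost, if_neg (by simp [hi]), compSize_insecure hn hac hi, hS, hcard]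
        push_cast; ring
      -- lower bound: center does not want to secure
      have hlow : L * ((n₀ : ℝ) + 1) / n ≤ C := by
        have := hNE c true
        rw [hcostf c hac, actualCost, if_pos (Function.update_self c true a)] at this
        exact this
      have hlow' : ((n₀ : ℝ) + 1) ≤ x := by
        rw [hxdef, le_div_iff₀ hL]
        have := (div_le_iff₀ hn').mp hlow
        linarith
      have hfl : (n₀ : ℤ) + 1 ≤ ⌊x⌋ := by
        rw [Int.le_floor]; push_cast; exact hlow'
      -- count bound
      have hn₀n : n₀ + 1 ≤ n := by
        have h := Finset.card_filter_le (univ : Finset (Fin n)) (fun j => a j = false)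
        rw [hS, Finset.card_univ, hcard] at h
        exact h
      -- social cost in terms of n₀
      have hsecard : (univ.filter (fun i => a i = true)).card = n - (n₀ + 1) := by
        have h2 := Finset.card_filter_add_card_filter_not
          (s := (univ : Finset (Fin n))) (p := fun i => a i = true)
        have h3 : univ.filter (fun i => ¬ a i = true) = univ.filter (fun j => a j = false) := by
          ext i; simp
        rw [h3, hS, Finset.card_univ, hcard] at h2
        omega
      have hsc : socialCost (starG n) C L a
          = ((n : ℝ) - ((n₀ : ℝ) + 1)) * C + ((n₀ : ℝ) + 1) * (L * ((n₀ : ℝ) + 1) / n) := by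
        have hsplit : ∀ i : Fin n, actualCost (starG n) C L a i
            = if a i = true then C else L * ((n₀ : ℝ) + 1) / n := by
          intro i
          by_cases h : a i = true
          · rw [actualCost, if_pos h, if_pos h]
          · have hf : a i = false := by cases hh : a i; rfl; exact absurd hh h
            rw [if_neg h, hcostf i hf]
        rw [socialCost, Finset.sum_congr rfl (fun i _ => hsplit i), Finset.sum_ite,
          Finset.sum_const, Finset.sum_const, hsecard]
        have hfilt : (univ.filter (fun i => ¬ a i = true)).card = n₀ + 1 := by
          rw [← hS]; congr 1; apply Finset.filter_congr; intro i _; simp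
        rw [hfilt, nsmul_eq_mul, nsmul_eq_mul, Nat.cast_sub hn₀n]
        push_cast; ring
      by_cases hsecure : ∃ i : Fin n, a i = true
      · -- there is a secure vertex (necessarily a leaf); upper bound holds
        obtain ⟨i, hit⟩ := hsecure
        have hi0 : i.val ≠ 0 := by
          intro h0
          have : i = c := Fin.ext h0
          rw [this, hac] at hit; exact absurd hit (by simp)
        have hic : i ≠ c := fun h => hi0 (by rw [h])
        have hhigh : C ≤ L * ((n₀ : ℝ) + 2) / n := by
          have := hNE i false
          rw [actualCost, if_pos hit] at this
          set b := Function.update a i false with hb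
          have hbi : b i = false := Function.update_self i false a
          have hbc : b c = false := by
            rw [hb, Function.update_of_ne (Ne.symm hic)]; exact hac
          have hidem : Function.update b i false = b := by rw [hb]; simp
          have hbcard : (univ.filter (fun j => b j = false)).card = n₀ + 2 := by
            have hins : univ.filter (fun j => b j = false)
                = insert i (univ.filter (fun j => a j = false)) := by
              ext j
              simp only [Finset.mem_filter, Finset.mem_univ, true_and, Finset.mem_insert]
              by_cases hji : j = i
              · subst hji; simp [hbi]
              · rw [hb, Function.update_of_ne hji]
                simp [hji]
            rw [hins, Finset.card_insert_of_notMem (by simp [hit]), hS]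
          rw [actualCost, if_neg (by simp [hbi]), compSize, hidem,
            comp_center_insecure hn hbc hbi, ncard_false, hbcard, hcard] at this
          calc C ≤ L * ((n₀ + 2 : ℕ) : ℝ) / n := this
            _ = L * ((n₀ : ℝ) + 2) / n := by push_cast; ring
        have hhigh' : x ≤ (n₀ : ℝ) + 2 := by
          rw [hxdef, div_le_iff₀ hL]
          have h := (le_div_iff₀ hn').mp hhigh
          linarith
        have hcl : ⌈x⌉ ≤ (n₀ : ℤ) + 2 := by
          rw [Int.ceil_le]; push_cast; exact hhigh'
        have hflc : ⌊x⌋ ≤ ⌈x⌉ := Int.floor_le_ceil x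
        have hcases : (n₀ : ℤ) = ⌈x⌉ - 2 ∨ (n₀ : ℤ) = ⌊x⌋ - 1 := by omega
        rcases hcases with h | h
        · left
          refine ⟨h, ?_⟩
          have hr : (n₀ : ℝ) = (⌈x⌉ : ℝ) - 2 := by exact_mod_cast h
          rw [hsc, hr]; ring
        · right
          refine ⟨h, ?_⟩
          have hr : (n₀ : ℝ) = (⌊x⌋ : ℝ) - 1 := by exact_mod_cast h
          rw [hsc, hr]; ring
      · -- everyone insecure: n₀ = n - 1 and x = n
        push_neg at hsecure
        have hall : ∀ i : Fin n, a i = false := by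
          intro i; cases h : a i; rfl; exact absurd h (hsecure i)
        have hn₀' : n₀ + 1 = n := by
          rw [← hS]
          have : univ.filter (fun j => a j = false) = univ := by
            apply Finset.filter_true_of_mem; intro i _; exact hall i
          rw [this, Finset.card_univ, hcard]
        have hxn : x = (n : ℝ) := by
          have h1 : (n : ℝ) ≤ x := by
            have : ((n₀ : ℝ) + 1) = (n : ℝ) := by exact_mod_cast hn₀'
            linarith [hlow']
          have h2 : x ≤ (n : ℝ) := by
            rw [hxdef, div_le_iff₀ hL]
            nlinarith
          linarith
        have hfx : ⌊x⌋ = (n : ℤ) := by rw [hxn]; exact_mod_cast Int.floor_natCast n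
        right
        constructor
        · rw [hfx]; omega
        · have hr : (n₀ : ℝ) = (⌊x⌋ : ℝ) - 1 := by
            rw [hfx]; push_cast; exact_mod_cast (by omega : (n₀ : ℤ) = (n : ℤ) - 1)
          rw [hsc, hr]; ring
  · intro hx
    have h1 : ⌈x⌉ ≤ ⌊x⌋ + 1 := Int.ceil_le_floor_add_one x
    have h2 : ⌊x⌋ ≤ ⌈x⌉ := Int.floor_le_ceil x
    have h3 : ⌈x⌉ ≠ ⌊x⌋ := by
      intro h
      exact hx ⟨⌊x⌋, le_antisymm (h ▸ Int.le_ceil x) (Int.floor_le x)⟩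
    omega
end
end

section
/- Deciding whether the virus inoculation game on a graph G admits a friendship Nash equilibrium of social cost at most Ck + (n−k)L/n (equivalently, with at most k secure players) is NP-complete for every F ∈ [0,1]; specifically, with C = 1 and L = n/1.5, G has a vertex cover of size k if and only if the game has an FNE with at most k secure players. -/
open Finset
open scoped Classical

noncomputable section

variable {V : Type*} [Fintype V] [DecidableEq V]

/-!
When `L / n < C < 2 L / n`, an insecure player pays `L / n < C` if all its neighbours are secure
and at least `2 L / n > C` otherwise. Turning insecure never lowers a neighbour's cost, and
leaves it unchanged when all neighbours are secure, so the friendship term never reverses these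
comparisons: the secure sets of FNE are exactly the minimal vertex covers. A cover of size `k`
shrinks to a minimal one, and the secure set of an FNE pads up to a cover of size exactly `k`.
-/

namespace SimpleGraph

variable {V : Type*} {G : SimpleGraph V} {s : Set V}

theorem minimal_isVertexCover_iff :
    Minimal G.IsVertexCover s ↔ G.IsVertexCover s ∧ ∀ v ∈ s, ∃ w, G.Adj v w ∧ w ∉ s := by
  rw [Set.minimal_iff_forall_sdiff_singleton fun _ _ ht hts => ht.subset hts]
  refine and_congr_right fun hs => forall₂_congr fun v hv => ?_
  constructor
  · intro hcov
    by_contra! hnbrs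
    refine hcov fun x y hxy => ?_
    rcases hs hxy with hx | hy
    · by_cases hxv : x = v
      · subst hxv
        exact Or.inr ⟨hnbrs y hxy, hxy.ne'⟩
      · exact Or.inl ⟨hx, hxv⟩
    · by_cases hyv : y = v
      · subst hyv
        exact Or.inl ⟨hnbrs x hxy.symm, hxy.ne⟩
      · exact Or.inr ⟨hy, hyv⟩
  · rintro ⟨w, hvw, hw⟩ hcov
    rcases hcov hvw with hv' | hw'
    · exact hv'.2 rfl
    · exact hw hw'.1

end SimpleGraph

section AttackComponent

variable {V : Type*} {G : SimpleGraph V} {a a' : V → Bool} {i j : V}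

theorem insecureReach_mono (h : ∀ x, a x = false → a' x = false)
    (hr : insecureReach G a i j) : insecureReach G a' i j :=
  Relation.ReflTransGen.mono (fun _ _ hxy => ⟨hxy.1, h _ hxy.2.1, h _ hxy.2.2⟩) _ _ hr

variable [DecidableEq V]

theorem compSize_eq_one (h : ∀ j, G.Adj i j → a j = true) : compSize G a i = 1 := by
  suffices {j | insecureReach G (Function.update a i false) i j} = {i} by
    rw [compSize, this, Set.ncard_singleton]
  refine Set.eq_singleton_iff_unique_mem.2 ⟨Relation.ReflTransGen.refl, fun j hj => ?_⟩
  rcases Relation.ReflTransGen.cases_head hj with rfl | ⟨y, ⟨hiy, -, hy⟩, -⟩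
  · rfl
  · rw [Function.update_of_ne hiy.ne', h y hiy] at hy
    cases hy

variable [Finite V]

theorem compSize_mono (h : ∀ x, a x = false → a' x = false) (i : V) :
    compSize G a i ≤ compSize G a' i := by
  refine Set.ncard_le_ncard (fun j hj => insecureReach_mono (fun x hx => ?_) hj) (Set.toFinite _)
  rcases eq_or_ne x i with rfl | hxi
  · simp
  · rw [Function.update_of_ne hxi] at hx ⊢
    exact h x hx

theorem two_le_compSize (hij : G.Adj i j) (hj : a j = false) : 2 ≤ compSize G a i := by
  have hreach : insecureReach G (Function.update a i false) i j :=
    .single ⟨hij, by simp, by rwa [Function.update_of_ne hij.ne']⟩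
  exact (Set.one_lt_ncard (Set.toFinite _)).2 ⟨i, .refl, j, hreach, hij.ne⟩

end AttackComponent

variable {G : SimpleGraph V} {a a' : V → Bool} {i j : V} {C L F : ℝ}

theorem actualCost_of_secure (h : a i = true) : actualCost G C L a i = C := by
  simp [actualCost, h]

theorem actualCost_of_insecure (h : a i = false) :
    actualCost G C L a i = L / Fintype.card V * compSize G a i := by
  simp [actualCost, h, mul_div_right_comm]

theorem actualCost_mono (hL : 0 ≤ L / Fintype.card V) (h : ∀ x, a x = false → a' x = false)
    (hj : a j = a' j) : actualCost G C L a j ≤ actualCost G C L a' j := by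
  cases haj : a j
  · rw [actualCost_of_insecure haj, actualCost_of_insecure (haj ▸ hj.symm)]
    gcongr
    exact compSize_mono h j
  · rw [actualCost_of_secure haj, actualCost_of_secure (haj ▸ hj.symm)]

theorem perceivedCost_of_forall_adj_secure (h : ∀ j, G.Adj i j → a j = true) :
    perceivedCost G C L F a i =
      actualCost G C L a i + F * (#(univ.filter fun j => G.Adj i j) * C) := by
  rw [perceivedCost, sum_congr rfl fun j hj => actualCost_of_secure (h j (mem_filter.1 hj).2),
    sum_const, nsmul_eq_mul]

/-- Becoming insecure can only enlarge the attack components of one's neighbours. -/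
theorem actualCost_sub_le_perceivedCost_sub_update_false (hF : 0 ≤ F)
    (hL : 0 ≤ L / Fintype.card V) :
    actualCost G C L (Function.update a i false) i - actualCost G C L a i ≤
      perceivedCost G C L F (Function.update a i false) i - perceivedCost G C L F a i := by
  have hmono : ∀ x, a x = false → Function.update a i false x = false := by
    intro x hx
    rcases eq_or_ne x i with rfl | hxi
    · simp
    · rwa [Function.update_of_ne hxi]
  have hnbrs : ∑ j ∈ univ.filter fun j => G.Adj i j, actualCost G C L a j ≤
      ∑ j ∈ univ.filter fun j => G.Adj i j, actualCost G C L (Function.update a i false) j :=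
    sum_le_sum fun j hj => actualCost_mono hL hmono
      (Function.update_of_ne (mem_filter.1 hj).2.ne' _ _).symm
  have := mul_le_mul_of_nonneg_left hnbrs hF
  simp only [perceivedCost]
  linarith

theorem isFNE_iff_forall_update_not :
    isFNE G C L F a ↔
      ∀ i, perceivedCost G C L F a i ≤ perceivedCost G C L F (Function.update a i (!a i)) i := by
  refine ⟨fun h i => h i _, fun h i b => ?_⟩
  rcases Bool.eq_or_eq_not b (a i) with rfl | rfl
  · rw [Function.update_eq_self]
  · exact h i

theorem isVertexCover_of_isFNE (hF : 0 ≤ F) (hL : 0 ≤ L / Fintype.card V)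
    (hC : C < 2 * (L / Fintype.card V)) (h : isFNE G C L F a) :
    G.IsVertexCover {i | a i = true} := by
  intro u v huv
  by_contra! hins
  simp only [Set.mem_ofPred_eq, Bool.not_eq_true] at hins
  have hdev := h u true
  have hinsecure : 2 * (L / Fintype.card V) ≤ actualCost G C L a u := by
    rw [actualCost_of_insecure hins.1, mul_comm]
    gcongr
    exact_mod_cast two_le_compSize huv hins.2
  have hgain := actualCost_sub_le_perceivedCost_sub_update_false (G := G) (C := C)
    (a := Function.update a u true) (i := u) hF hL
  rw [Function.update_idem, ← hins.1, Function.update_eq_self,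
    actualCost_of_secure (a := Function.update a u true) (by simp)] at hgain
  linarith

theorem exists_adj_insecure_of_isFNE (hC : L / Fintype.card V < C) (h : isFNE G C L F a)
    (hi : a i = true) : ∃ j, G.Adj i j ∧ a j = false := by
  by_contra! hnbrs
  simp only [ne_eq, Bool.not_eq_false] at hnbrs
  have hnbrs' : ∀ j, G.Adj i j → Function.update a i false j = true := fun j hij => by
    rw [Function.update_of_ne hij.ne']
    exact hnbrs j hij
  have hdev := h i false
  rw [perceivedCost_of_forall_adj_secure hnbrs, perceivedCost_of_forall_adj_secure hnbrs',
    actualCost_of_secure hi, actualCost_of_insecure (by simp), compSize_eq_one hnbrs'] at hdev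
  push_cast at hdev
  linarith

theorem isFNE_of_minimal_isVertexCover (hF : 0 ≤ F) (hC₁ : L / Fintype.card V ≤ C)
    (hC₂ : C ≤ 2 * (L / Fintype.card V)) (h : Minimal G.IsVertexCover {i | a i = true}) :
    isFNE G C L F a := by
  have hL : 0 ≤ L / Fintype.card V := by linarith
  obtain ⟨hcover, hnbr⟩ := SimpleGraph.minimal_isVertexCover_iff.1 h
  rw [isFNE_iff_forall_update_not]
  intro i
  cases hi : a i
  · have hnbrs : ∀ j, G.Adj i j → a j = true := fun j hij =>
      (hcover hij).resolve_left (by simp [hi])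
    have hnbrs' : ∀ j, G.Adj i j → Function.update a i true j = true := fun j hij => by
      rw [Function.update_of_ne hij.ne']
      exact hnbrs j hij
    rw [Bool.not_false, perceivedCost_of_forall_adj_secure hnbrs,
      perceivedCost_of_forall_adj_secure hnbrs', actualCost_of_insecure hi, compSize_eq_one hnbrs,
      actualCost_of_secure (by simp)]
    push_cast
    linarith
  · obtain ⟨j, hij, hj⟩ := hnbr i (by simp [hi])
    have hinsecure : C ≤ actualCost G C L (Function.update a i false) i := by
      rw [actualCost_of_insecure (by simp), mul_comm]
      have hsize : (2 : ℝ) ≤ compSize G (Function.update a i false) i := by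
        exact_mod_cast two_le_compSize hij (by simpa [Function.update_of_ne hij.ne'] using hj)
      exact hC₂.trans (mul_le_mul_of_nonneg_right hsize hL)
    have hgain := actualCost_sub_le_perceivedCost_sub_update_false (G := G) (C := C)
      (a := a) (i := i) hF hL
    rw [actualCost_of_secure hi] at hgain
    rw [Bool.not_true]
    linarith

theorem isFNE_iff_minimal_isVertexCover (hF : 0 ≤ F) (hC₁ : L / Fintype.card V < C)
    (hC₂ : C < 2 * (L / Fintype.card V)) :
    isFNE G C L F a ↔ Minimal G.IsVertexCover {i | a i = true} := by
  refine ⟨fun h => SimpleGraph.minimal_isVertexCover_iff.2 ⟨?_, fun i hi => ?_⟩,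
    isFNE_of_minimal_isVertexCover hF hC₁.le hC₂.le⟩
  · exact isVertexCover_of_isFNE hF (by linarith) hC₂ h
  · simpa using exists_adj_insecure_of_isFNE hC₁ h hi

theorem stmt12_general (G : SimpleGraph V) (F : ℝ) (hF0 : 0 ≤ F)
    (hn : 2 ≤ Fintype.card V) (k : ℕ) (hk : k ≤ Fintype.card V) :
    (∃ s : Finset V, (∀ u v : V, G.Adj u v → u ∈ s ∨ v ∈ s) ∧ s.card = k) ↔
    (∃ a : V → Bool, isFNE G 1 ((Fintype.card V : ℝ) / 1.5) F a ∧
      (Finset.univ.filter (fun i => a i = true)).card ≤ k) := by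
  have hunit : (Fintype.card V : ℝ) / 1.5 / Fintype.card V = 2 / 3 := by
    have : (Fintype.card V : ℝ) ≠ 0 := Nat.cast_ne_zero.2 (by omega)
    field_simp
    norm_num
  have hFNE (a : V → Bool) :
      isFNE G 1 ((Fintype.card V : ℝ) / 1.5) F a ↔ Minimal G.IsVertexCover {i | a i = true} :=
    isFNE_iff_minimal_isVertexCover hF0 (by rw [hunit]; norm_num) (by rw [hunit]; norm_num)
  constructor
  · rintro ⟨s, hs, rfl⟩
    obtain ⟨t, hts, ht⟩ :=
      exists_minimal_le_of_wellFoundedLT G.IsVertexCover (s : Set V) fun _ _ => hs _ _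
    refine ⟨fun i => decide (i ∈ t), (hFNE _).2 (by simpa using ht), card_le_card fun i hi => ?_⟩
    exact hts (by simpa using hi)
  · rintro ⟨a, ha, hcard⟩
    obtain ⟨u, hsecure, -, rfl⟩ :=
      exists_subsuperset_card_eq (subset_univ _) hcard (by simpa using hk)
    refine ⟨u, fun x y hxy => ((hFNE a).1 ha).1.subset (fun i hi => hsecure ?_) hxy, rfl⟩
    simpa using hi

/-- The reduction underlying NP-completeness of computing the best FNE: with `C = 1` and
`L = n/1.5`, for every `F ∈ [0,1]` and `k ≤ n`, the graph `G` has a vertex cover of size `k`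
if and only if the virus inoculation game admits an FNE with at most `k` secure players
(equivalently, of social cost at most `Ck + (n−k)L/n`). -/
theorem stmt12 (G : SimpleGraph V) (F : ℝ) (hF0 : 0 ≤ F) (hF1 : F ≤ 1)
    (hn : 2 ≤ Fintype.card V) (k : ℕ) (hk : k ≤ Fintype.card V) :
    (∃ s : Finset V, (∀ u v : V, G.Adj u v → u ∈ s ∨ v ∈ s) ∧ s.card = k) ↔
    (∃ a : V → Bool, isFNE G 1 ((Fintype.card V : ℝ) / 1.5) F a ∧
      (Finset.univ.filter (fun i => a i = true)).card ≤ k) :=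
  stmt12_general G F hF0 hn k hk
end
end

section
/- Under the relative friendship model, a player p_i will inoculate (inoculation strictly lowers its relative perceived cost) if and only if the size k_i of its attack component satisfies k_i > (|Γ(p_i)|·Cn/L + F·Σ_{j∈Γ̄(p_i)} k_j)/(|Γ(p_i)| + F·|Γ̄(p_i)|), where Γ(p_i) is p_i's neighborhood, Γ̄(p_i) its insecure neighbors, and k_j the attack component sizes of insecure neighbors when p_i is secure. -/
open Finset

theorem insecureCost_sub_inoculatedCost (n C L F g c ki S : ℝ)
    (hn : n ≠ 0) (hL : L ≠ 0) (hd : g + c ≠ 0) :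
    (L * ki / n + F / (g + c) * (g * C + c * (L * ki / n))) -
        (C + F / (g + c) * (g * C + L * S / n)) =
      L / (n * (g + c)) * ((g + c + F * c) * ki - ((g + c) * (C * n / L) + F * S)) := by
  field_simp
  ring

theorem stmt14_general {ι : Type*} (s : Finset ι) (k : ι → ℝ) (n C L F gsec ki : ℝ)
    (hn : 0 < n) (hL : 0 < L) (hF0 : 0 ≤ F)
    (hdeg : 0 < gsec + (s.card : ℝ)) :
    (L * ki / n + F / (gsec + (s.card : ℝ)) *
        (gsec * C + (s.card : ℝ) * (L * ki / n)) >
      C + F / (gsec + (s.card : ℝ)) * (gsec * C + ∑ j ∈ s, L * k j / n)) ↔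
    ki > ((gsec + (s.card : ℝ)) * (C * n / L) + F * ∑ j ∈ s, k j) /
          ((gsec + (s.card : ℝ)) + F * (s.card : ℝ)) := by
  have hdenom : 0 < gsec + s.card + F * s.card := by positivity
  have hsum : ∑ j ∈ s, L * k j / n = L * (∑ j ∈ s, k j) / n := by
    rw [Finset.mul_sum, Finset.sum_div]
  rw [hsum, gt_iff_lt, ← sub_pos, insecureCost_sub_inoculatedCost _ _ _ _ _ _ _ _ hn.ne' hL.ne'
      hdeg.ne', mul_pos_iff_of_pos_left (by positivity), sub_pos, gt_iff_lt, div_lt_iff₀ hdenom,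
    mul_comm ki]

/-- Lemma (attack component threshold, relative friendship model).
Player `p_i` has `gsec` secure neighbors and insecure neighbors indexed by `s` (so its degree is
`|Γ(p_i)| = gsec + |s|`); the `k j` are the attack component sizes of the insecure neighbors
assuming `p_i` is secure. Then `p_i` strictly prefers to inoculate (its relative perceived cost
as an insecure player in an attack component of size `ki` exceeds its relative perceived cost
when inoculated) if and only if
`ki > (|Γ(p_i)|·Cn/L + F·Σ_{j∈Γ̄} k j)/(|Γ(p_i)| + F·|Γ̄|)`. -/
theorem stmt14 {ι : Type*} (s : Finset ι) (k : ι → ℝ) (n C L F gsec ki : ℝ)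
    (hn : 0 < n) (hL : 0 < L) (hF0 : 0 ≤ F) (hF1 : F ≤ 1)
    (hC : L / n < C) (hCL : C ≤ L)
    (hgsec : 0 ≤ gsec) (hdeg : 0 < gsec + (s.card : ℝ)) :
    (L * ki / n + F / (gsec + (s.card : ℝ)) *
        (gsec * C + (s.card : ℝ) * (L * ki / n)) >
      C + F / (gsec + (s.card : ℝ)) * (gsec * C + ∑ j ∈ s, L * k j / n)) ↔
    ki > ((gsec + (s.card : ℝ)) * (C * n / L) + F * ∑ j ∈ s, k j) /
          ((gsec + (s.card : ℝ)) + F * (s.card : ℝ)) :=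
  stmt14_general s k n C L F gsec ki hn hL hF0 hdeg
end
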